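/- arXiv:1806.10500 — 6 statements merged into one kernel-verified Lean document; each statement's English description precedes it below -/
import Mathlib

section
/- If x, y, z are distinct pairwise relatively prime positive integers, then for every n ≥ 4 the matrix M_n(x,y,z) is product-irregular, i.e., the products of the nonzero entries of distinct rows are distinct. -/
/-- The matrix `M_n(x,y,z)` (1-based indices translated to `Fin n`): zero diagonal,
`x` when `j ≤ n - i + 1` (and `i ≠ j`), `z` at positions `(k,n)` and `(n,k)` where
`k = ⌈n/2⌉ + 1`, and `y` otherwise. -/
def Mmat (n x y z : ℕ) : Matrix (Fin n) (Fin n) ℕ := fun i j =>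
  if i = j then 0
  else if (j : ℕ) + 1 ≤ n - (i : ℕ) then x
  else if (((i : ℕ) + 1 = (n + 1) / 2 + 1 ∧ (j : ℕ) + 1 = n) ∨
           ((i : ℕ) + 1 = n ∧ (j : ℕ) + 1 = (n + 1) / 2 + 1)) then z
  else y

/-- Product of the nonzero entries of row `i`. -/
def rowProd {ι : Type*} [Fintype ι] [DecidableEq ι] (M : Matrix ι ι ℕ) (i : ι) : ℕ :=
  ∏ j ∈ Finset.univ.filter (fun j => M i j ≠ 0), M i j

/-- A square matrix is product-irregular if distinct rows have distinct products of
nonzero entries. -/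
def MatPI {ι : Type*} [Fintype ι] [DecidableEq ι] (M : Matrix ι ι ℕ) : Prop :=
  Function.Injective (rowProd M)

/-!
Since `x, y, z > 0`, the nonzero entries of a row are exactly its off-diagonal ones, so every row
product has the form `x ^ a * y ^ b * z ^ c` with `a + b + c = n - 1`. Because `x, y, z` are
pairwise coprime and at most one of them is `1`, such a product determines `(a, b, c)`.
The number `a` of entries `x` strictly decreases down the rows, except that rows `⌈n/2⌉`
and `⌈n/2⌉ + 1` both have `n - ⌈n/2⌉` of them; the entry `z` in row `k = ⌈n/2⌉ + 1`
separates these two.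
-/

open Finset

theorem eq_of_pow_mul_eq_pow_mul_of_coprime {x m m' a a' : ℕ} (hx : 1 < x)
    (hm : x.Coprime m) (hm' : x.Coprime m') (h : x ^ a * m = x ^ a' * m') : a = a' := by
  wlog hle : a ≤ a' generalizing a a' m m'
  · exact (this hm' hm h.symm (by omega)).symm
  obtain ⟨d, rfl⟩ := Nat.exists_eq_add_of_le hle
  rw [pow_add, mul_assoc, Nat.mul_left_cancel_iff (by positivity)] at h
  rcases d with _ | d
  · rfl
  · have hdvd : x ∣ m := h ▸ dvd_mul_of_dvd_left (dvd_pow_self x d.succ_ne_zero) m'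
    exact absurd (hm.eq_one_of_dvd hdvd) hx.ne'

theorem exponents_eq_of_pow_mul_pow_mul_pow_eq {x y z a b c a' b' c' : ℕ}
    (hx : 0 < x) (hy : 0 < y) (hz : 0 < z) (hxy : x ≠ y) (hyz : y ≠ z) (hxz : x ≠ z)
    (cxy : x.Coprime y) (cyz : y.Coprime z) (cxz : x.Coprime z)
    (hs : a + b + c = a' + b' + c') (h : x ^ a * y ^ b * z ^ c = x ^ a' * y ^ b' * z ^ c') :
    a = a' ∧ b = b' ∧ c = c' := by
  have ha : 1 < x → a = a' := fun hx1 =>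
    eq_of_pow_mul_eq_pow_mul_of_coprime hx1 ((cxy.pow_right b).mul_right (cxz.pow_right c))
      ((cxy.pow_right b').mul_right (cxz.pow_right c')) (by simpa only [mul_assoc] using h)
  have hb : 1 < y → b = b' := fun hy1 =>
    eq_of_pow_mul_eq_pow_mul_of_coprime hy1
      ((cxy.symm.pow_right a).mul_right (cyz.pow_right c))
      ((cxy.symm.pow_right a').mul_right (cyz.pow_right c')) (by convert h using 1 <;> ring)
  have hc : 1 < z → c = c' := fun hz1 =>
    eq_of_pow_mul_eq_pow_mul_of_coprime hz1
      ((cxz.symm.pow_right a).mul_right (cyz.symm.pow_right b))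
      ((cxz.symm.pow_right a').mul_right (cyz.symm.pow_right b')) (by convert h using 1 <;> ring)
  omega

theorem prod_ite_ite_const {ι M : Type*} [CommMonoid M] (s : Finset ι) (p q : ι → Prop)
    [DecidablePred p] [DecidablePred q] (x y z : M) :
    ∏ j ∈ s, (if p j then x else if q j then z else y) =
      x ^ #{j ∈ s | p j} * y ^ (#s - #{j ∈ s | p j} - #{j ∈ s | ¬p j ∧ q j}) *
        z ^ #{j ∈ s | ¬p j ∧ q j} := by
  have hy : #s - #{j ∈ s | p j} - #{j ∈ s | ¬p j ∧ q j} = #{j ∈ s | ¬p j ∧ ¬q j} := by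
    rw [← card_filter_add_card_filter_not (s := s) p,
      ← card_filter_add_card_filter_not (s := {j ∈ s | ¬p j}) q, filter_filter, filter_filter,
      Nat.add_sub_cancel_left, Nat.add_sub_cancel_left]
  rw [hy, prod_ite, prod_ite, prod_const, prod_const, prod_const, filter_filter, filter_filter,
    mul_assoc, mul_comm (y ^ _)]

theorem rowProd_eq_prod_erase {ι : Type*} [Fintype ι] [DecidableEq ι] {M : Matrix ι ι ℕ}
    (hM : ∀ i j, M i j = 0 ↔ i = j) (i : ι) : rowProd M i = ∏ j ∈ univ.erase i, M i j := by
  rw [rowProd, ← filter_ne']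
  simp only [ne_eq, hM, eq_comm]

-- Row `i` (0-based) of `Mmat n x y z` has `xExp n i` entries `x` and `zExp n i` entries `z`.
def xExp (n i : ℕ) : ℕ := if 2 * i < n then n - 1 - i else n - i

def zExp (n i : ℕ) : ℕ := if i = (n + 1) / 2 ∨ i = n - 1 then 1 else 0

theorem eq_of_xExp_eq_of_zExp_eq {n a b : ℕ} (ha : a < n) (hb : b < n)
    (hx : xExp n a = xExp n b) (hz : zExp n a = zExp n b) : a = b := by
  unfold xExp zExp at *
  split_ifs at * <;> omega

theorem xExp_add_zExp_le {n i : ℕ} (hn : 3 ≤ n) (hi : i < n) :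
    xExp n i + zExp n i ≤ n - 1 := by
  unfold xExp zExp
  split_ifs <;> omega

namespace Mmat

variable {n x y z : ℕ}

theorem eq_zero_iff (hx : 0 < x) (hy : 0 < y) (hz : 0 < z) (i j : Fin n) :
    Mmat n x y z i j = 0 ↔ i = j := by
  unfold Mmat
  split_ifs with h <;> simp [h, hx.ne', hy.ne', hz.ne']

theorem apply_of_ne {i j : Fin n} (h : i ≠ j) :
    Mmat n x y z i j =
      if (j : ℕ) + 1 ≤ n - i then x
      else if ((i : ℕ) + 1 = (n + 1) / 2 + 1 ∧ (j : ℕ) + 1 = n) ∨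
          ((i : ℕ) + 1 = n ∧ (j : ℕ) + 1 = (n + 1) / 2 + 1) then z
      else y :=
  if_neg h

theorem card_x_entries (i : Fin n) :
    #((univ.erase i).filter fun j : Fin n => (j : ℕ) + 1 ≤ n - i) = xExp n i := by
  have hlt : ({j | (j : ℕ) + 1 ≤ n - i} : Finset (Fin n)) =
      ({j | (j : ℕ) < n - i} : Finset (Fin n)) := by
    ext j
    simp only [mem_filter, mem_univ, true_and]
    omega
  rw [filter_erase, card_erase_eq_ite, hlt, Fin.card_filter_val_lt, xExp]
  simp only [mem_filter, mem_univ, true_and]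
  split_ifs <;> omega

theorem card_z_entries (hn : 4 ≤ n) (i : Fin n) :
    #((univ.erase i).filter fun j : Fin n => ¬(j : ℕ) + 1 ≤ n - i ∧
      (((i : ℕ) + 1 = (n + 1) / 2 + 1 ∧ (j : ℕ) + 1 = n) ∨
        ((i : ℕ) + 1 = n ∧ (j : ℕ) + 1 = (n + 1) / 2 + 1))) = zExp n i := by
  unfold zExp
  split_ifs with h
  · have hpartner : (if (i : ℕ) = (n + 1) / 2 then n - 1 else (n + 1) / 2) < n := by
      split_ifs <;> omega
    refine card_eq_one.mpr ⟨⟨_, hpartner⟩, ?_⟩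
    ext j
    simp only [mem_filter, mem_erase, mem_univ, mem_singleton, and_true, ne_eq, Fin.ext_iff]
    split_ifs <;> omega
  · exact card_eq_zero.mpr (filter_eq_empty_iff.mpr fun j _ => by omega)

theorem rowProd_eq (hn : 4 ≤ n) (hx : 0 < x) (hy : 0 < y) (hz : 0 < z) (i : Fin n) :
    rowProd (Mmat n x y z) i =
      x ^ xExp n i * y ^ (n - 1 - xExp n i - zExp n i) * z ^ zExp n i := by
  rw [rowProd_eq_prod_erase (eq_zero_iff hx hy hz),
    prod_congr rfl fun j hj => apply_of_ne (ne_of_mem_erase hj).symm, prod_ite_ite_const,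
    card_x_entries, card_z_entries hn, card_erase_of_mem (mem_univ _), card_univ,
    Fintype.card_fin]

end Mmat

/-- If `x, y, z` are distinct pairwise relatively prime positive integers, then for every
`n ≥ 4` the matrix `M_n(x,y,z)` is product-irregular. -/
theorem stmt_2 (x y z : ℕ) (hx : 0 < x) (hy : 0 < y) (hz : 0 < z)
    (hxy : x ≠ y) (hyz : y ≠ z) (hxz : x ≠ z)
    (cxy : Nat.Coprime x y) (cyz : Nat.Coprime y z) (cxz : Nat.Coprime x z)
    (n : ℕ) (hn : 4 ≤ n) :
    MatPI (Mmat n x y z) := by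
  intro i j h
  rw [Mmat.rowProd_eq hn hx hy hz, Mmat.rowProd_eq hn hx hy hz] at h
  have hsum := xExp_add_zExp_le (by omega) i.isLt
  have hsum' := xExp_add_zExp_le (by omega) j.isLt
  obtain ⟨hxExp, -, hzExp⟩ :=
    exponents_eq_of_pow_mul_pow_mul_pow_eq hx hy hz hxy hyz hxz cxy cyz cxz (by omega) h
  exact Fin.ext (eq_of_xExp_eq_of_zExp_eq i.isLt j.isLt hxExp hzExp)
end

section
/- Set A_n = M_n(1,2,3) and B_m = M_m(2,3,1). For every m ≥ n ≥ 4 with (n,m) ∉ {(4,4), (5,5), (6,6)}, the direct sum A_n ⊕ B_m is product-irregular: all n + m row products (of nonzero entries) are pairwise distinct. -/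
/-!
Off the diagonal, row `i` of `M_n(x,y,z)` has `n - i` entries `x` in the columns `j < n - i`
(one fewer when that range contains `i`), a single `z` when `i` is one of the two special rows,
and `y` elsewhere. Hence the rows of `A_n` have products `2^b 3^c` and those of `B_m` products
`2^a 3^b`, with explicit exponents `a, b, c`. By unique factorisation two rows collide only if
their exponent pairs agree, and comparing the closed forms shows that this happens only inside
`A_n ⊕ B_n` for `n ≤ 6`.
-/

open Finset

section BlockDiagonal

variable {ι κ : Type*} [Fintype ι] [DecidableEq ι] [Fintype κ] [DecidableEq κ]

lemma rowProd_fromBlocks_zero (A : Matrix ι ι ℕ) (B : Matrix κ κ ℕ) :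
    rowProd (Matrix.fromBlocks A 0 0 B) = Sum.elim (rowProd A) (rowProd B) := by
  funext r
  -- after `simp` the two sides differ only in their `Decidable` instances
  rcases r with i | i <;>
    simp [rowProd, prod_filter, Fintype.prod_sum_type] <;> rfl

lemma matPI_fromBlocks_zero_iff (A : Matrix ι ι ℕ) (B : Matrix κ κ ℕ) :
    MatPI (Matrix.fromBlocks A 0 0 B) ↔
      MatPI A ∧ MatPI B ∧ ∀ i j, rowProd A i ≠ rowProd B j := by
  rw [MatPI, rowProd_fromBlocks_zero, Sum.elim_injective]
  rfl

end BlockDiagonal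

lemma pow_mul_pow_inj_of_prime {p q a b c d : ℕ} (hp : p.Prime) (hq : q.Prime) (hpq : p ≠ q)
    (h : p ^ a * q ^ b = p ^ c * q ^ d) : a = c ∧ b = d := by
  have hp' := congrArg (Nat.factorization · p) h
  have hq' := congrArg (Nat.factorization · q) h
  simp [Nat.factorization_mul, hp.ne_zero, hq.ne_zero, hp.factorization, hq.factorization,
    hpq, hpq.symm] at hp' hq'
  exact ⟨hp', hq'⟩

/-- With 0-based indices, the entries `z` of `Mmat n x y z` sit at `(K, n - 1)` and `(n - 1, K)`,
where `K = (n + 1) / 2` is the paper's `k = ⌈n/2⌉ + 1` shifted down by one. -/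
abbrev zPos (n i j : ℕ) : Prop := (i = (n + 1) / 2 ∧ j = n - 1) ∨ (i = n - 1 ∧ j = (n + 1) / 2)

-- The numbers of entries `x`, `y` and `z` in row `i` of `Mmat n x y z`, for `n ≥ 4`.
def xCount (n i : ℕ) : ℕ := if i < n - i then n - i - 1 else n - i

def zCount (n i : ℕ) : ℕ := if i = (n + 1) / 2 ∨ i = n - 1 then 1 else 0

def yCount (n i : ℕ) : ℕ := n - 1 - xCount n i - zCount n i

lemma rowProd_Mmat_eq_prod_erase {n x y z : ℕ} (hx : x ≠ 0) (hy : y ≠ 0) (hz : z ≠ 0)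
    (i : Fin n) :
    rowProd (Mmat n x y z) i =
      ∏ j ∈ (range n).erase i, if j < n - i then x else if zPos n i j then z else y := by
  calc rowProd (Mmat n x y z) i
      = ∏ j ∈ range n, if (i : ℕ) = j then 1
          else if j < n - i then x else if zPos n i j then z else y := by
        rw [rowProd, prod_filter, ← Fin.prod_univ_eq_prod_range]
        refine prod_congr rfl fun j _ => ?_
        have := i.isLt
        have := j.isLt
        simp only [Mmat, Fin.ext_iff]
        split_ifs <;> first | rfl | omega
    _ = ∏ j ∈ (range n).erase i, if (i : ℕ) = j then 1
          else if j < n - i then x else if zPos n i j then z else y :=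
        (prod_erase _ (by simp)).symm
    _ = _ := prod_congr rfl fun j hj => if_neg (ne_of_mem_erase hj).symm

lemma card_filter_zPos {n i : ℕ} (hn : 4 ≤ n) (hi : i < n) :
    #(((range n).erase i).filter fun j => ¬j < n - i ∧ zPos n i j) = zCount n i := by
  by_cases hK : i = (n + 1) / 2
  · rw [show ((range n).erase i).filter (fun j => ¬j < n - i ∧ zPos n i j) = {n - 1} by
      ext; simp; omega, zCount, if_pos (Or.inl hK), card_singleton]
  by_cases hN : i = n - 1
  · rw [show ((range n).erase i).filter (fun j => ¬j < n - i ∧ zPos n i j) = {(n + 1) / 2} by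
      ext; simp; omega, zCount, if_pos (Or.inr hN), card_singleton]
  rw [filter_false_of_mem fun j _ => by omega, zCount, if_neg (by omega), card_empty]

lemma rowProd_Mmat {n x y z : ℕ} (hn : 4 ≤ n) (hx : x ≠ 0) (hy : y ≠ 0) (hz : z ≠ 0)
    (i : Fin n) :
    rowProd (Mmat n x y z) i = x ^ xCount n i * y ^ yCount n i * z ^ zCount n i := by
  set S := (range n).erase (i : ℕ)
  have hX : #(S.filter (· < n - i)) = xCount n i := by
    rw [show S.filter (· < n - i) = (range (n - i)).erase i by ext; simp [S]; omega,
      card_erase_eq_ite, xCount]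
    simp
  have hZ : #(S.filter fun j => ¬j < n - i ∧ zPos n i j) = zCount n i :=
    card_filter_zPos hn i.isLt
  have hY : #(S.filter fun j => ¬j < n - i ∧ ¬zPos n i j) = yCount n i := by
    have hS : #S = n - 1 := by simp [S, card_erase_of_mem]
    have h₁ := card_filter_add_card_filter_not (s := S) (· < n - (i : ℕ))
    have h₂ := card_filter_add_card_filter_not (s := S.filter (¬· < n - (i : ℕ))) (zPos n i)
    rw [filter_filter, filter_filter] at h₂
    rw [yCount]
    omega
  rw [rowProd_Mmat_eq_prod_erase hx hy hz, prod_ite, prod_ite, prod_const, prod_const, prod_const,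
    filter_filter, filter_filter, hX, hY, hZ]
  ring

lemma rowProd_Mmat_one_two_three {n : ℕ} (hn : 4 ≤ n) (i : Fin n) :
    rowProd (Mmat n 1 2 3) i = 2 ^ yCount n i * 3 ^ zCount n i := by
  rw [rowProd_Mmat hn one_ne_zero two_ne_zero three_ne_zero, one_pow, one_mul]

lemma rowProd_Mmat_two_three_one {n : ℕ} (hn : 4 ≤ n) (i : Fin n) :
    rowProd (Mmat n 2 3 1) i = 2 ^ xCount n i * 3 ^ yCount n i := by
  rw [rowProd_Mmat hn two_ne_zero three_ne_zero one_ne_zero, one_pow, mul_one]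

lemma matPI_Mmat_one_two_three {n : ℕ} (hn : 4 ≤ n) : MatPI (Mmat n 1 2 3) := by
  intro i i' h
  rw [rowProd_Mmat_one_two_three hn, rowProd_Mmat_one_two_three hn] at h
  obtain ⟨hy, hz⟩ := pow_mul_pow_inj_of_prime Nat.prime_two Nat.prime_three (by norm_num) h
  have := i.isLt
  have := i'.isLt
  simp only [yCount, xCount, zCount] at hy hz
  ext
  split_ifs at hy hz <;> omega

lemma matPI_Mmat_two_three_one {n : ℕ} (hn : 4 ≤ n) : MatPI (Mmat n 2 3 1) := by
  intro i i' h
  rw [rowProd_Mmat_two_three_one hn, rowProd_Mmat_two_three_one hn] at h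
  obtain ⟨hx, hy⟩ := pow_mul_pow_inj_of_prime Nat.prime_two Nat.prime_three (by norm_num) h
  have := i.isLt
  have := i'.isLt
  simp only [yCount, xCount, zCount] at hx hy
  ext
  split_ifs at hx hy <;> omega

lemma rowProd_Mmat_one_two_three_ne {n m : ℕ} (hn : 4 ≤ n) (hnm : n ≤ m)
    (h44 : (n, m) ≠ (4, 4)) (h55 : (n, m) ≠ (5, 5)) (h66 : (n, m) ≠ (6, 6))
    (i : Fin n) (j : Fin m) : rowProd (Mmat n 1 2 3) i ≠ rowProd (Mmat m 2 3 1) j := by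
  intro h
  rw [rowProd_Mmat_one_two_three hn, rowProd_Mmat_two_three_one (hn.trans hnm)] at h
  obtain ⟨h₂, h₃⟩ := pow_mul_pow_inj_of_prime Nat.prime_two Nat.prime_three (by norm_num) h
  have := i.isLt
  have := j.isLt
  simp only [ne_eq, Prod.mk.injEq] at h44 h55 h66
  simp only [yCount, xCount, zCount] at h₂ h₃
  split_ifs at h₂ h₃ <;> omega

/-- For every `m ≥ n ≥ 4` with `(n,m) ∉ {(4,4),(5,5),(6,6)}`, the direct sum
`A_n ⊕ B_m` is product-irregular, where `A_n = M_n(1,2,3)` and `B_m = M_m(2,3,1)`. -/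
theorem stmt_4 (n m : ℕ) (hn : 4 ≤ n) (hnm : n ≤ m)
    (h44 : (n, m) ≠ (4, 4)) (h55 : (n, m) ≠ (5, 5)) (h66 : (n, m) ≠ (6, 6)) :
    MatPI (Matrix.fromBlocks (Mmat n 1 2 3) 0 0 (Mmat m 2 3 1)) :=
  (matPI_fromBlocks_zero_iff _ _).2 ⟨matPI_Mmat_one_two_three hn,
    matPI_Mmat_two_three_one (hn.trans hnm), rowProd_Mmat_one_two_three_ne hn hnm h44 h55 h66⟩
end

section
/- For every n ≥ 4, the graph obtained from the disjoint union K_2 + K_n by adding one edge between the two components has product irregularity strength 3. -/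
open Finset

open scoped Classical in
/-- The product degree of vertex `v`: the product of the labels of the edges incident with `v`. -/
noncomputable def pdeg {V : Type*} [Fintype V] (G : SimpleGraph V) (w : Sym2 V → ℕ) (v : V) : ℕ :=
  ∏ u ∈ Finset.univ.filter (fun u => G.Adj v u), w s(v, u)

/-- A labelling is product-irregular if distinct vertices have distinct product degrees. -/
def ProductIrregular {V : Type*} [Fintype V] (G : SimpleGraph V) (w : Sym2 V → ℕ) : Prop :=
  Function.Injective (pdeg G w)

/-- The product irregularity strength: the least `s` admitting a product-irregular labelling
with labels in `{1,…,s}`. -/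
noncomputable def ps {V : Type*} [Fintype V] (G : SimpleGraph V) : ℕ :=
  sInf {s : ℕ | ∃ w : Sym2 V → ℕ,
    (∀ u v : V, G.Adj u v → w s(u, v) ∈ Finset.Icc 1 s) ∧ ProductIrregular G w}
/-- The disjoint union `K_n + K_m` of two complete graphs. -/
def cliquePair (n m : ℕ) : SimpleGraph (Fin n ⊕ Fin m) where
  Adj a b := a ≠ b ∧ a.isLeft = b.isLeft
  symm := ⟨fun a b h => ⟨h.1.symm, h.2.symm⟩⟩
  loopless := ⟨fun a h => h.1 rfl⟩

/-- Adding a single edge joining `u` and `v`. -/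
def addEdge {V : Type*} (G : SimpleGraph V) (u v : V) : SimpleGraph V :=
  G ⊔ SimpleGraph.fromEdgeSet {s(u, v)}

/-!
With labels in `{1, 2}` every product degree is a power `2 ^ k` with `k` at most the degree.
No vertex is adjacent to all others, so the `n + 2` vertices have degree at most `n` and two
product degrees coincide: `ps ≥ 3`.

For `ps ≤ 3`, label the `K_2` edge by `1` and the bridge by `2`, so the `K_2` vertices get product
degrees `1` and `2`. Index `K_n` by `0, …, n - 1` with the bridge endpoint last and label `ij`
by `2` when `i + j ≥ n - 1`. Vertex `i` then gets `2 ^ (i + 1)` if `2 i + 1 < n` and `2 ^ i`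
otherwise (`2 ^ n` for the bridge endpoint). The only clashes are `2 ^ 1` at vertex `0` (with a
`K_2` vertex) and `2 ^ (n / 2)` at vertices `n / 2 - 1` and `n / 2`. Relabelling the edge
`{0, n / 2}` by `3` separates both, by unique factorisation.
-/

lemma prod_eq_three_pow_mul_two_pow {ι : Type*} (s : Finset ι) (f : ι → ℕ)
    (hf : ∀ i ∈ s, f i ∈ Icc 1 3) :
    ∏ i ∈ s, f i = 3 ^ #{i ∈ s | f i = 3} * 2 ^ #{i ∈ s | f i = 2} := by
  have hsplit (i : ι) (hi : i ∈ s) :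
      f i = 3 ^ (if f i = 3 then 1 else 0) * 2 ^ (if f i = 2 then 1 else 0) := by
    obtain ⟨h1, h3⟩ := mem_Icc.mp (hf i hi)
    rcases (by omega : f i = 1 ∨ f i = 2 ∨ f i = 3) with h | h | h <;> simp [h]
  rw [prod_congr rfl hsplit, prod_mul_distrib, prod_pow_eq_pow_sum, prod_pow_eq_pow_sum,
    card_filter, card_filter]

lemma injective_three_pow_mul_two_pow :
    Function.Injective fun p : ℕ × ℕ => 3 ^ p.1 * 2 ^ p.2 := by
  intro p q h
  have hexp (r : ℕ) := congrArg (Nat.factorization · r) h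
  simp only [Nat.factorization_mul (pow_ne_zero _ three_ne_zero) (pow_ne_zero _ two_ne_zero),
    Nat.factorization_pow, Nat.prime_two.factorization, Nat.prime_three.factorization] at hexp
  exact Prod.ext (by simpa using hexp 3) (by simpa using hexp 2)

lemma addEdge_adj {V : Type*} {G : SimpleGraph V} {u v x y : V} (huv : u ≠ v) :
    (addEdge G u v).Adj x y ↔ G.Adj x y ∨ (x = u ∧ y = v ∨ x = v ∧ y = u) := by
  simp only [addEdge, SimpleGraph.sup_adj, SimpleGraph.fromEdgeSet_adj, Set.mem_singleton_iff,
    Sym2.eq_iff]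
  constructor
  · rintro (h | ⟨h, -⟩) <;> tauto
  · rintro (h | h)
    · exact Or.inl h
    · refine Or.inr ⟨h, ?_⟩
      rcases h with ⟨rfl, rfl⟩ | ⟨rfl, rfl⟩
      exacts [huv, huv.symm]

section ProductDegree

variable {V : Type*} [Fintype V]

lemma pdeg_eq_prod_of_adj_iff {G : SimpleGraph V} {w : Sym2 V → ℕ} {v : V} {N : Finset V}
    (hN : ∀ u, G.Adj v u ↔ u ∈ N) : pdeg G w v = ∏ u ∈ N, w s(v, u) := by
  unfold pdeg
  congr 1
  ext u
  simp [hN]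

lemma pdeg_eq_prod_neighborFinset (G : SimpleGraph V) [DecidableRel G.Adj] (w : Sym2 V → ℕ)
    (v : V) : pdeg G w v = ∏ u ∈ G.neighborFinset v, w s(v, u) :=
  pdeg_eq_prod_of_adj_iff fun u => (G.mem_neighborFinset v u).symm

lemma pdeg_addEdge [DecidableEq V] (G : SimpleGraph V) (w : Sym2 V → ℕ) {u v : V}
    (huv : u ≠ v) (h : ¬ G.Adj u v) (x : V) :
    pdeg (addEdge G u v) w x = pdeg G w x * if x = u ∨ x = v then w s(u, v) else 1 := by
  classical
  have hadj (y : V) : (addEdge G u v).Adj x y ↔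
      y ∈ G.neighborFinset x ∨ (x = u ∧ y = v ∨ x = v ∧ y = u) := by
    rw [addEdge_adj huv, SimpleGraph.mem_neighborFinset]
  rw [pdeg_eq_prod_neighborFinset G]
  by_cases hxu : x = u
  · subst hxu
    have hv : v ∉ G.neighborFinset x := by simpa using h
    rw [pdeg_eq_prod_of_adj_iff (N := insert v (G.neighborFinset x))
        (fun y => by rw [hadj, mem_insert]; tauto),
      prod_insert hv, if_pos (Or.inl rfl), mul_comm]
  by_cases hxv : x = v
  · subst hxv
    have hu : u ∉ G.neighborFinset x := by simpa [SimpleGraph.adj_comm] using h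
    rw [pdeg_eq_prod_of_adj_iff (N := insert u (G.neighborFinset x))
        (fun y => by rw [hadj, mem_insert]; tauto),
      prod_insert hu, if_pos (Or.inr rfl), mul_comm, Sym2.eq_swap]
  · rw [pdeg_eq_prod_of_adj_iff (N := G.neighborFinset x) (fun y => by rw [hadj]; tauto),
      if_neg (by tauto), mul_one]

end ProductDegree

section LowerBound

variable {V : Type*} [Fintype V] {G : SimpleGraph V} [DecidableRel G.Adj] {w : Sym2 V → ℕ}

lemma pdeg_eq_two_pow (hw : ∀ u v, G.Adj u v → w s(u, v) ∈ Icc 1 2) (v : V) :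
    pdeg G w v = 2 ^ #{u ∈ G.neighborFinset v | w s(v, u) = 2} := by
  have hlabel : ∀ u ∈ G.neighborFinset v, w s(v, u) ∈ Icc 1 2 :=
    fun u hu => hw v u ((G.mem_neighborFinset v u).mp hu)
  rw [pdeg_eq_prod_neighborFinset, prod_eq_three_pow_mul_two_pow _ _
    fun u hu => Icc_subset_Icc_right (by norm_num) (hlabel u hu),
    filter_false_of_mem fun u hu => by have := mem_Icc.mp (hlabel u hu); omega,
    card_empty, pow_zero, one_mul]

lemma card_le_maxDegree_add_one (hw : ∀ u v, G.Adj u v → w s(u, v) ∈ Icc 1 2)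
    (h : ProductIrregular G w) : Fintype.card V ≤ G.maxDegree + 1 := by
  have hmaps : Set.MapsTo (pdeg G w) (univ : Finset V)
      ((range (G.maxDegree + 1)).image (2 ^ ·)) := by
    intro v _
    rw [pdeg_eq_two_pow hw]
    exact mem_image_of_mem _ <| mem_range.mpr <| Nat.lt_succ_of_le <|
      (card_filter_le _ _).trans (G.degree_le_maxDegree v)
  calc Fintype.card V = #(univ : Finset V) := card_univ.symm
    _ ≤ #((range (G.maxDegree + 1)).image (2 ^ ·)) := card_le_card_of_injOn _ hmaps h.injOn
    _ ≤ G.maxDegree + 1 := card_image_le.trans (card_range _).le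

lemma ps_eq_three [Nonempty V] (hG : ∀ v, ¬ G.IsUniversal v)
    (hw : ∀ u v, G.Adj u v → w s(u, v) ∈ Icc 1 3) (h : ProductIrregular G w) : ps G = 3 := by
  refine le_antisymm (Nat.sInf_le ⟨w, hw, h⟩) (le_csInf ⟨3, w, hw, h⟩ ?_)
  rintro s ⟨w', hw', h'⟩
  by_contra! hs
  have hcard := card_le_maxDegree_add_one
    (fun u v huv => Icc_subset_Icc_right (by omega) (hw' u v huv)) h'
  obtain ⟨v, hv⟩ := G.exists_maximal_degree_vertex
  have hdeg := (G.degree_lt_card_sub_one v).mpr (hG v)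
  omega

end LowerBound

section CliquePair

variable {m n : ℕ}

@[simp] lemma cliquePair_adj_inl_inl {x y : Fin m} :
    (cliquePair m n).Adj (.inl x) (.inl y) ↔ x ≠ y := by
  simp [cliquePair]

@[simp] lemma cliquePair_adj_inr_inr {x y : Fin n} :
    (cliquePair m n).Adj (.inr x) (.inr y) ↔ x ≠ y := by
  simp [cliquePair]

@[simp] lemma not_cliquePair_adj_inl_inr {x : Fin m} {y : Fin n} :
    ¬ (cliquePair m n).Adj (.inl x) (.inr y) := by
  simp [cliquePair]

@[simp] lemma not_cliquePair_adj_inr_inl {x : Fin n} {y : Fin m} :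
    ¬ (cliquePair m n).Adj (.inr x) (.inl y) := by
  simp [cliquePair]

lemma pdeg_cliquePair_inl (w : Sym2 (Fin m ⊕ Fin n) → ℕ) (x : Fin m) :
    pdeg (cliquePair m n) w (.inl x) = ∏ y ∈ univ.erase x, w s(.inl x, .inl y) := by
  rw [pdeg_eq_prod_of_adj_iff (N := (univ.erase x).map .inl), prod_map]
  · rfl
  · rintro (y | y) <;> simp [eq_comm]

lemma pdeg_cliquePair_inr (w : Sym2 (Fin m ⊕ Fin n) → ℕ) (x : Fin n) :
    pdeg (cliquePair m n) w (.inr x) = ∏ y ∈ univ.erase x, w s(.inr x, .inr y) := by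
  rw [pdeg_eq_prod_of_adj_iff (N := (univ.erase x).map .inr), prod_map]
  · rfl
  · rintro (y | y) <;> simp [eq_comm]

end CliquePair

namespace BridgedCliques

variable {n : ℕ}

-- The diagonal value 1 lets products over neighbours run over all indices.
def cliqueLabel (n i j : ℕ) : ℕ :=
  if i = j then 1
  else if i = 0 ∧ j = n / 2 ∨ i = n / 2 ∧ j = 0 then 3
  else if n ≤ i + j + 1 then 2 else 1

def threeExp (n i : ℕ) : ℕ := if i = 0 ∨ i = n / 2 then 1 else 0

def twoExp (n i : ℕ) : ℕ := if 2 * i + 1 < n then i + 1 else i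

lemma cliqueLabel_comm (i j : ℕ) : cliqueLabel n i j = cliqueLabel n j i := by
  unfold cliqueLabel
  split_ifs <;> omega

lemma cliqueLabel_self (i : ℕ) : cliqueLabel n i i = 1 := if_pos rfl

lemma cliqueLabel_mem_Icc (i j : ℕ) : cliqueLabel n i j ∈ Icc 1 3 := by
  unfold cliqueLabel
  split_ifs <;> simp

lemma card_cliqueLabel_eq_three {i : ℕ} (hn : 3 ≤ n) :
    #{j ∈ range n | cliqueLabel n i j = 3} = threeExp n i := by
  have hfilter : {j ∈ range n | cliqueLabel n i j = 3} =
      if i = 0 ∨ i = n / 2 then {n / 2 - i} else ∅ := by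
    ext j
    rw [Finset.mem_filter, mem_range, cliqueLabel]
    split_ifs <;> simp <;> omega
  rw [hfilter, threeExp]
  split_ifs <;> rfl

lemma card_cliqueLabel_eq_two {i : ℕ} (hn : 3 ≤ n) (hi : i < n) :
    #{j ∈ range n | cliqueLabel n i j = 2} = twoExp n i := by
  have hfilter : {j ∈ range n | cliqueLabel n i j = 2} = (Ico (n - 1 - i) n).erase i := by
    ext j
    rw [Finset.mem_filter, mem_range, mem_erase, mem_Ico, cliqueLabel]
    split_ifs <;> omega
  rw [hfilter, card_erase_eq_ite, Nat.card_Ico, twoExp]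
  split_ifs with h <;> rw [mem_Ico] at h <;> omega

lemma prod_range_cliqueLabel {i : ℕ} (hn : 3 ≤ n) (hi : i < n) :
    ∏ j ∈ range n, cliqueLabel n i j = 3 ^ threeExp n i * 2 ^ twoExp n i := by
  rw [prod_eq_three_pow_mul_two_pow _ _ fun j _ => cliqueLabel_mem_Icc i j,
    card_cliqueLabel_eq_three hn, card_cliqueLabel_eq_two hn hi]

def cliqueExponents (n i : ℕ) : ℕ × ℕ :=
  (threeExp n i, twoExp n i + if i = n - 1 then 1 else 0)

lemma cliqueExponents_injOn (hn : 4 ≤ n) {i j : ℕ} (hi : i < n) (hj : j < n)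
    (h : cliqueExponents n i = cliqueExponents n j) : i = j := by
  obtain ⟨h3, h2⟩ := Prod.ext_iff.mp h
  simp only [cliqueExponents, threeExp, twoExp] at h3 h2
  split_ifs at h3 h2 <;> omega

lemma cliqueExponents_ne (hn : 4 ≤ n) {i : ℕ} (hi : i < n) {k : ℕ} (hk : k ≤ 1) :
    cliqueExponents n i ≠ (0, k) := by
  intro h
  obtain ⟨h3, h2⟩ := Prod.ext_iff.mp h
  simp only [cliqueExponents, threeExp, twoExp] at h3 h2
  split_ifs at h3 h2 <;> omega

def rank (b : Fin n) : Fin n ≃ Fin n :=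
  Equiv.swap b ⟨n - 1, Nat.sub_lt b.pos Nat.one_pos⟩

lemma rank_eq_sub_one_iff {b v : Fin n} : (rank b v : ℕ) = n - 1 ↔ v = b := by
  rw [← (rank b).apply_eq_iff_eq, rank, Equiv.swap_apply_left, Fin.ext_iff]

abbrev graph (n : ℕ) (a : Fin 2) (b : Fin n) : SimpleGraph (Fin 2 ⊕ Fin n) :=
  addEdge (cliquePair 2 n) (.inl a) (.inr b)

def pairLabel (b : Fin n) : Fin 2 ⊕ Fin n → Fin 2 ⊕ Fin n → ℕ
  | .inl _, .inl _ => 1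
  | .inl _, .inr _ => 2
  | .inr _, .inl _ => 2
  | .inr u, .inr v => cliqueLabel n (rank b u) (rank b v)

def label (b : Fin n) : Sym2 (Fin 2 ⊕ Fin n) → ℕ :=
  Sym2.lift ⟨pairLabel b, by rintro (x | x) (y | y) <;> simp [pairLabel, cliqueLabel_comm]⟩

lemma label_mem_Icc (b : Fin n) (x y : Fin 2 ⊕ Fin n) : label b s(x, y) ∈ Icc 1 3 := by
  rcases x with x | x <;> rcases y with y | y
  all_goals first | exact cliqueLabel_mem_Icc _ _ | simp [label, pairLabel]

lemma label_inr_inr (b u v : Fin n) :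
    label b s(.inr u, .inr v) = cliqueLabel n (rank b u) (rank b v) := rfl

def exponents (a : Fin 2) (b : Fin n) : Fin 2 ⊕ Fin n → ℕ × ℕ
  | .inl x => (0, if x = a then 1 else 0)
  | .inr v => cliqueExponents n (rank b v)

lemma pdeg_graph (hn : 3 ≤ n) (a : Fin 2) (b : Fin n) (x : Fin 2 ⊕ Fin n) :
    pdeg (graph n a b) (label b) x = 3 ^ (exponents a b x).1 * 2 ^ (exponents a b x).2 := by
  rw [pdeg_addEdge _ _ Sum.inl_ne_inr (by simp)]
  rcases x with x | v
  · rw [pdeg_cliquePair_inl]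
    by_cases hx : x = a <;> simp [hx, exponents, label, pairLabel]
  · have hK : pdeg (cliquePair 2 n) (label b) (.inr v) =
        3 ^ threeExp n (rank b v) * 2 ^ twoExp n (rank b v) := by
      simp only [pdeg_cliquePair_inr, label_inr_inr]
      rw [prod_erase (f := fun y => cliqueLabel n (rank b v) (rank b y)) _ (cliqueLabel_self _),
        (rank b).prod_comp (cliqueLabel n (rank b v) ·),
        Fin.prod_univ_eq_prod_range (cliqueLabel n (rank b v) ·),
        prod_range_cliqueLabel hn (rank b v).isLt]
    rw [hK]
    simp only [exponents, cliqueExponents, pow_add, rank_eq_sub_one_iff]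
    by_cases hv : v = b <;> simp [hv, label, pairLabel, mul_assoc]

lemma exponents_injective (hn : 4 ≤ n) (a : Fin 2) (b : Fin n) :
    Function.Injective (exponents a b) := by
  rintro (x | u) (y | v) h <;> simp only [exponents] at h
  · fin_cases a <;> fin_cases x <;> fin_cases y <;> simp_all
  · exact absurd h.symm (cliqueExponents_ne hn (rank b v).isLt (by split_ifs <;> simp))
  · exact absurd h (cliqueExponents_ne hn (rank b u).isLt (by split_ifs <;> simp))
  · exact congrArg Sum.inr <| (rank b).injective <| Fin.ext <|
      cliqueExponents_injOn hn (rank b u).isLt (rank b v).isLt h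

lemma productIrregular_label (hn : 4 ≤ n) (a : Fin 2) (b : Fin n) :
    ProductIrregular (graph n a b) (label b) := by
  have hpdeg :
      pdeg (graph n a b) (label b) = (fun p : ℕ × ℕ => 3 ^ p.1 * 2 ^ p.2) ∘ exponents a b :=
    funext (pdeg_graph (by omega) a b)
  rw [ProductIrregular, hpdeg]
  exact injective_three_pow_mul_two_pow.comp (exponents_injective hn a b)

lemma not_isUniversal (hn : 2 ≤ n) (a : Fin 2) (b : Fin n) (x : Fin 2 ⊕ Fin n) :
    ¬ (graph n a b).IsUniversal x := by
  intro hx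
  rcases x with x | v
  · have : Nontrivial (Fin n) := Fin.nontrivial_iff_two_le.mpr hn
    obtain ⟨j, hj⟩ := exists_ne b
    have := hx (w := .inr j) Sum.inl_ne_inr
    simp [addEdge_adj, hj] at this
  · obtain ⟨y, hy⟩ := exists_ne a
    have := hx (w := .inl y) Sum.inr_ne_inl
    simp [addEdge_adj, hy] at this

end BridgedCliques

/-- For every `n ≥ 4`, the graph obtained from `K_2 + K_n` by adding one edge between
the two components has product irregularity strength `3`. -/
theorem stmt_6 (n : ℕ) (hn : 4 ≤ n) (a : Fin 2) (b : Fin n) :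
    ps (addEdge (cliquePair 2 n) (Sum.inl a) (Sum.inr b)) = 3 := by
  classical
  exact ps_eq_three (BridgedCliques.not_isUniversal (by omega) a b)
    (fun u v _ => BridgedCliques.label_mem_Icc b u v) (BridgedCliques.productIrregular_label hn a b)
end

section
/- The disjoint union K_5 + K_5 of two complete graphs on 5 vertices has product irregularity strength 3. -/
open Finset

/-!
With labels in `{1, 2}` every product degree of a graph of maximum degree `Δ` divides `2 ^ Δ`,
which has only `Δ + 1` divisors; since `K_5 + K_5` has ten vertices and `Δ = 4`, two labels do not
suffice. Labels in `{1, 2, 3}` do, by an explicit labelling.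
-/

namespace SimpleGraph

variable {V : Type*} [Fintype V] (G : SimpleGraph V) [DecidableRel G.Adj]

lemma pdeg_eq_prod_neighborFinset (w : Sym2 V → ℕ) (v : V) :
    pdeg G w v = ∏ u ∈ G.neighborFinset v, w s(v, u) := by
  rw [pdeg, neighborFinset_eq_filter]
  congr!

variable {G}

lemma pdeg_dvd_two_pow_maxDegree {w : Sym2 V → ℕ}
    (hw : ∀ u v : V, G.Adj u v → w s(u, v) ∈ Icc 1 2) (v : V) :
    pdeg G w v ∣ 2 ^ G.maxDegree := by
  have hdeg : 2 ^ G.degree v ∣ 2 ^ G.maxDegree := pow_dvd_pow 2 (G.degree_le_maxDegree v)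
  refine dvd_trans ?_ hdeg
  rw [pdeg_eq_prod_neighborFinset, ← card_neighborFinset_eq_degree, ← prod_const]
  refine prod_dvd_prod_of_dvd _ _ fun u hu => ?_
  obtain ⟨hlabel₁, hlabel₂⟩ := mem_Icc.mp (hw v u ((mem_neighborFinset G v u).mp hu))
  interval_cases w s(v, u) <;> norm_num

theorem card_le_maxDegree_add_one_of_productIrregular {w : Sym2 V → ℕ}
    (hw : ∀ u v : V, G.Adj u v → w s(u, v) ∈ Icc 1 2) (hirr : ProductIrregular G w) :
    Fintype.card V ≤ G.maxDegree + 1 := by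
  have hmaps : ∀ v ∈ (univ : Finset V), pdeg G w v ∈ (2 ^ G.maxDegree).divisors := fun v _ =>
    Nat.mem_divisors.mpr ⟨pdeg_dvd_two_pow_maxDegree hw v, by positivity⟩
  simpa [Nat.divisors_prime_pow Nat.prime_two] using card_le_card_of_injOn _ hmaps hirr.injOn

theorem three_le_of_productIrregular (hcard : G.maxDegree + 1 < Fintype.card V) {s : ℕ}
    {w : Sym2 V → ℕ} (hw : ∀ u v : V, G.Adj u v → w s(u, v) ∈ Icc 1 s)
    (hirr : ProductIrregular G w) : 3 ≤ s := by
  by_contra! hs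
  have hw₂ : ∀ u v, G.Adj u v → w s(u, v) ∈ Icc 1 2 := fun u v huv =>
    Icc_subset_Icc_right (by omega) (hw u v huv)
  exact (card_le_maxDegree_add_one_of_productIrregular hw₂ hirr).not_gt hcard

end SimpleGraph

instance (n m : ℕ) : DecidableRel (cliquePair n m).Adj :=
  fun a b => inferInstanceAs (Decidable (a ≠ b ∧ a.isLeft = b.isLeft))

lemma cliquePair_five_five_maxDegree_add_one_lt_card :
    (cliquePair 5 5).maxDegree + 1 < Fintype.card (Fin 5 ⊕ Fin 5) := by
  have hdeg : (cliquePair 5 5).maxDegree ≤ 4 :=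
    SimpleGraph.maxDegree_le_of_forall_degree_le _ _ (by decide)
  simp only [Fintype.card_sum, Fintype.card_fin]
  omega

-- Product degrees `1, 2, 4, 6, 12` on the first clique and `9, 18, 27, 36, 54` on the second.
def cliquePairFiveFiveLabel : Fin 5 ⊕ Fin 5 → Fin 5 ⊕ Fin 5 → ℕ
  | .inl i, .inl j =>
    !![1, 1, 1, 1, 1; 1, 1, 1, 1, 2; 1, 1, 1, 2, 2; 1, 1, 2, 1, 3; 1, 2, 2, 3, 1] i j
  | .inr i, .inr j =>
    !![1, 1, 1, 3, 3; 1, 1, 3, 2, 3; 1, 3, 1, 3, 3; 3, 2, 3, 1, 2; 3, 3, 3, 2, 1] i j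
  | _, _ => 1

def cliquePairFiveFiveLabelling : Sym2 (Fin 5 ⊕ Fin 5) → ℕ :=
  Sym2.lift ⟨cliquePairFiveFiveLabel, by decide⟩

lemma cliquePairFiveFiveLabelling_mem_Icc :
    ∀ u v, (cliquePair 5 5).Adj u v → cliquePairFiveFiveLabelling s(u, v) ∈ Icc 1 3 := by
  decide

lemma productIrregular_cliquePairFiveFiveLabelling :
    ProductIrregular (cliquePair 5 5) cliquePairFiveFiveLabelling := by
  unfold ProductIrregular
  simp only [funext (SimpleGraph.pdeg_eq_prod_neighborFinset _ _)]
  decide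

/-- The disjoint union `K_5 + K_5` has product irregularity strength `3`. -/
theorem stmt_8 : ps (cliquePair 5 5) = 3 := by
  have hmem : 3 ∈ {s : ℕ | ∃ w : Sym2 (Fin 5 ⊕ Fin 5) → ℕ,
      (∀ u v, (cliquePair 5 5).Adj u v → w s(u, v) ∈ Icc 1 s) ∧
      ProductIrregular (cliquePair 5 5) w} :=
    ⟨_, cliquePairFiveFiveLabelling_mem_Icc, productIrregular_cliquePairFiveFiveLabelling⟩
  refine le_antisymm (Nat.sInf_le hmem) (le_csInf ⟨3, hmem⟩ ?_)
  rintro s ⟨w, hw, hirr⟩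
  exact SimpleGraph.three_le_of_productIrregular
    cliquePair_five_five_maxDegree_add_one_lt_card hw hirr
end

section
/- Every connected graph G of order at least 7 whose vertex set can be partitioned into two cliques has product irregularity strength 3. -/
open Finset

/-! ### Auxiliary material -/

section Aux

lemma prod_ite_pow {α : Type*} [DecidableEq α] (S : Finset α) (p : α → Prop) [DecidablePred p]
    (a : ℕ) : ∏ j ∈ S, (if p j then a else 1) = a ^ (S.filter p).card := by
  rw [← Finset.prod_filter, Finset.prod_const]

lemma pow23 {x y x' y' : ℕ} (h : 2^x*3^y = 2^x'*3^y') : x = x' ∧ y = y' := by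
  constructor
  · have := congrArg (Nat.factorization · 2) h
    simpa [Nat.factorization_mul, Nat.Prime.factorization_pow, Nat.prime_two, Nat.prime_three,
      Finsupp.single_apply, pow_ne_zero] using this
  · have := congrArg (Nat.factorization · 3) h
    simpa [Nat.factorization_mul, Nat.Prime.factorization_pow, Nat.prime_two, Nat.prime_three,
      Finsupp.single_apply, pow_ne_zero] using this

lemma pow32 {x y x' y' : ℕ} (h : 3^x*2^y = 3^x'*2^y') : x = x' ∧ y = y' := by
  have := pow23 (x := y) (y := x) (x' := y') (y' := x') (by rw [mul_comm, h, mul_comm])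
  exact ⟨this.2, this.1⟩

/-- `x`-degree in the half-graph scheme. -/
def xdeg (m i : ℕ) : ℕ := if m ≤ 2*i+1 then i else i+1

def ydeg (m t i : ℕ) : ℕ := if i = t ∨ i = m/2 then 1 else 0

def ydegL (m i : ℕ) : ℕ := if i = 0 then 2 else if i = m/2 ∨ i = m-2 then 1 else 0

lemma card_xdeg (m i : ℕ) (hi : i < m) :
    (((Finset.range m).erase i).filter (fun j => m ≤ i + j + 1)).card = xdeg m i := by
  rw [Finset.filter_erase]
  have h1 : (Finset.range m).filter (fun j => m ≤ i + j + 1) = Finset.Ico (m - i - 1) m := by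
    ext j; simp only [Finset.mem_filter, Finset.mem_range, Finset.mem_Ico]; omega
  rw [h1]
  by_cases h : m ≤ 2*i+1
  · rw [Finset.card_erase_of_mem (by simp only [Finset.mem_Ico]; omega), Nat.card_Ico]
    simp only [xdeg, if_pos h]; omega
  · rw [Finset.erase_eq_of_notMem (by simp only [Finset.mem_Ico]; omega), Nat.card_Ico]
    simp only [xdeg, if_neg h]; omega

/-- the half-graph scheme with a single extra `q`-edge `{t, m/2}`. -/
def schemeG (m t p q : ℕ) : ℕ → ℕ → ℕ := fun i j =>
  if m ≤ i + j + 1 then p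
  else if (i = t ∧ j = m/2) ∨ (j = t ∧ i = m/2) then q else 1

/-- the half-graph scheme with two extra `q`-edges `{0, m/2}`, `{0, m-2}`. -/
def schemeL (m p q : ℕ) : ℕ → ℕ → ℕ := fun i j =>
  if m ≤ i + j + 1 then p
  else if (i = 0 ∧ (j = m/2 ∨ j = m-2)) ∨ (j = 0 ∧ (i = m/2 ∨ i = m-2)) then q else 1

lemma schemeG_symm (m t p q i j : ℕ) : schemeG m t p q j i = schemeG m t p q i j := by
  simp only [schemeG]
  rw [Nat.add_comm j i]
  by_cases h : m ≤ i + j + 1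
  · simp [h]
  · simp only [if_neg h]
    by_cases h2 : (i = t ∧ j = m/2) ∨ (j = t ∧ i = m/2)
    · rw [if_pos h2, if_pos (by tauto)]
    · rw [if_neg h2, if_neg (by tauto)]

lemma schemeL_symm (m p q i j : ℕ) : schemeL m p q j i = schemeL m p q i j := by
  simp only [schemeL]
  rw [Nat.add_comm j i]
  by_cases h : m ≤ i + j + 1
  · simp [h]
  · simp only [if_neg h]
    by_cases h2 : (i = 0 ∧ (j = m/2 ∨ j = m-2)) ∨ (j = 0 ∧ (i = m/2 ∨ i = m-2))
    · rw [if_pos h2, if_pos (by tauto)]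
    · rw [if_neg h2, if_neg (by tauto)]

lemma schemeG_mem (m t p q : ℕ) (hp : p ∈ Finset.Icc 1 3) (hq : q ∈ Finset.Icc 1 3) :
    ∀ i j, schemeG m t p q i j ∈ Finset.Icc 1 3 := by
  intro i j
  unfold schemeG
  split_ifs <;> first | exact hp | exact hq | decide

lemma schemeL_mem (m p q : ℕ) (hp : p ∈ Finset.Icc 1 3) (hq : q ∈ Finset.Icc 1 3) :
    ∀ i j, schemeL m p q i j ∈ Finset.Icc 1 3 := by
  intro i j
  unfold schemeL
  split_ifs <;> first | exact hp | exact hq | decide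

lemma schemeG_prod (m t p q : ℕ) (ht : t + m/2 + 1 < m) (i : ℕ) (hi : i < m) :
    ∏ j ∈ (Finset.range m).erase i, schemeG m t p q i j
      = p ^ (xdeg m i) * q ^ (ydeg m t i) := by
  have htk : t ≠ m/2 := by omega
  have hsplit : ∀ j, schemeG m t p q i j =
      (if m ≤ i + j + 1 then p else 1) *
      (if (¬ m ≤ i + j + 1) ∧ ((i = t ∧ j = m/2) ∨ (j = t ∧ i = m/2)) then q else 1) := by
    intro j
    simp only [schemeG]
    by_cases h1 : m ≤ i + j + 1
    · simp [h1]
    · by_cases h2 : (i = t ∧ j = m/2) ∨ (j = t ∧ i = m/2) <;> simp [h1, h2]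
  rw [Finset.prod_congr rfl (fun j _ => hsplit j), Finset.prod_mul_distrib,
    prod_ite_pow, prod_ite_pow, card_xdeg m i hi]
  congr 2
  by_cases hit : i = t
  · have : (((Finset.range m).erase i).filter
        (fun j => (¬ m ≤ i + j + 1) ∧ ((i = t ∧ j = m/2) ∨ (j = t ∧ i = m/2)))) = {m/2} := by
      ext j
      simp only [Finset.mem_filter, Finset.mem_erase, Finset.mem_range, Finset.mem_singleton]
      constructor
      · rintro ⟨⟨hne, hjm⟩, hnc, hor⟩
        rcases hor with ⟨_, h⟩ | ⟨h1, h2⟩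
        · exact h
        · omega
      · intro h; subst h; subst hit; refine ⟨⟨by omega, by omega⟩, by omega, Or.inl ⟨rfl, rfl⟩⟩
    rw [this]; simp [ydeg, hit]
  · by_cases hik : i = m/2
    · have : (((Finset.range m).erase i).filter
          (fun j => (¬ m ≤ i + j + 1) ∧ ((i = t ∧ j = m/2) ∨ (j = t ∧ i = m/2)))) = {t} := by
        ext j
        simp only [Finset.mem_filter, Finset.mem_erase, Finset.mem_range, Finset.mem_singleton]
        constructor
        · rintro ⟨⟨hne, hjm⟩, hnc, hor⟩
          rcases hor with ⟨h1, h2⟩ | ⟨h, _⟩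
          · omega
          · exact h
        · intro h; subst h; subst hik; exact ⟨⟨fun h => htk (by omega), by omega⟩, by omega,
            Or.inr ⟨rfl, rfl⟩⟩
      rw [this]; simp [ydeg, hik]
    · have : (((Finset.range m).erase i).filter
          (fun j => (¬ m ≤ i + j + 1) ∧ ((i = t ∧ j = m/2) ∨ (j = t ∧ i = m/2)))) = ∅ := by
        ext j
        simp only [Finset.mem_filter, Finset.mem_erase, Finset.mem_range, Finset.notMem_empty,
          iff_false]
        rintro ⟨_, _, hor⟩
        tauto
      rw [this]; simp [ydeg, hit, hik]

lemma schemeL_prod (m p q : ℕ) (hm : 5 ≤ m) (i : ℕ) (hi : i < m) :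
    ∏ j ∈ (Finset.range m).erase i, schemeL m p q i j
      = p ^ (xdeg m i) * q ^ (ydegL m i) := by
  have hsplit : ∀ j, schemeL m p q i j =
      (if m ≤ i + j + 1 then p else 1) *
      (if (¬ m ≤ i + j + 1) ∧ ((i = 0 ∧ (j = m/2 ∨ j = m-2)) ∨ (j = 0 ∧ (i = m/2 ∨ i = m-2)))
        then q else 1) := by
    intro j
    simp only [schemeL]
    by_cases h1 : m ≤ i + j + 1
    · simp [h1]
    · by_cases h2 : (i = 0 ∧ (j = m/2 ∨ j = m-2)) ∨ (j = 0 ∧ (i = m/2 ∨ i = m-2)) <;>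
        simp [h1, h2]
  rw [Finset.prod_congr rfl (fun j _ => hsplit j), Finset.prod_mul_distrib,
    prod_ite_pow, prod_ite_pow, card_xdeg m i hi]
  congr 2
  by_cases hi0 : i = 0
  · have : (((Finset.range m).erase i).filter
        (fun j => (¬ m ≤ i + j + 1) ∧ ((i = 0 ∧ (j = m/2 ∨ j = m-2)) ∨
          (j = 0 ∧ (i = m/2 ∨ i = m-2))))) = {m/2, m-2} := by
      ext j
      simp only [Finset.mem_filter, Finset.mem_erase, Finset.mem_range, Finset.mem_insert,
        Finset.mem_singleton]
      subst hi0
      constructor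
      · rintro ⟨⟨hne, hjm⟩, hnc, hor⟩
        rcases hor with ⟨_, h⟩ | ⟨h1, h2⟩ <;> omega
      · rintro (h | h) <;> subst h <;> refine ⟨⟨by omega, by omega⟩, by omega, by omega⟩
    rw [this, Finset.card_insert_of_notMem (by simp only [Finset.mem_singleton]; omega),
      Finset.card_singleton]
    simp [ydegL, hi0]
  · by_cases hik : i = m/2 ∨ i = m-2
    · have : (((Finset.range m).erase i).filter
          (fun j => (¬ m ≤ i + j + 1) ∧ ((i = 0 ∧ (j = m/2 ∨ j = m-2)) ∨
            (j = 0 ∧ (i = m/2 ∨ i = m-2))))) = {0} := by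
        ext j
        simp only [Finset.mem_filter, Finset.mem_erase, Finset.mem_range, Finset.mem_singleton]
        constructor
        · rintro ⟨⟨hne, hjm⟩, hnc, hor⟩
          rcases hor with ⟨h1, _⟩ | ⟨h, _⟩ <;> omega
        · intro h; subst h
          exact ⟨⟨by omega, by omega⟩, by omega, Or.inr ⟨rfl, hik⟩⟩
      rw [this]
      simp only [Finset.card_singleton, ydegL, if_neg hi0, if_pos hik]
    · have : (((Finset.range m).erase i).filter
          (fun j => (¬ m ≤ i + j + 1) ∧ ((i = 0 ∧ (j = m/2 ∨ j = m-2)) ∨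
            (j = 0 ∧ (i = m/2 ∨ i = m-2))))) = ∅ := by
        ext j
        simp only [Finset.mem_filter, Finset.mem_erase, Finset.mem_range, Finset.notMem_empty,
          iff_false]
        rintro ⟨_, _, hor⟩
        tauto
      rw [this]
      simp [ydegL, hi0, hik]

lemma schemeG_inj (m t : ℕ) (hm : 4 ≤ m) (ht : t + m/2 + 1 < m) (ht2 : t + 1 ≠ m/2) :
    ∀ i, i < m → ∀ j, j < m →
      2^(xdeg m i)*3^(ydeg m t i) = 2^(xdeg m j)*3^(ydeg m t j) → i = j := by
  intro i hi j hj h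
  obtain ⟨h1, h2⟩ := pow23 h
  simp only [xdeg, ydeg] at h1 h2
  split_ifs at h1 h2 <;> omega

lemma schemeG_inj_sw (m t : ℕ) (hm : 4 ≤ m) (ht : t + m/2 + 1 < m) (ht2 : t + 1 ≠ m/2) :
    ∀ i, i < m → ∀ j, j < m →
      3^(xdeg m i)*2^(ydeg m t i) = 3^(xdeg m j)*2^(ydeg m t j) → i = j := by
  intro i hi j hj h
  obtain ⟨h1, h2⟩ := pow32 h
  simp only [xdeg, ydeg] at h1 h2
  split_ifs at h1 h2 <;> omega

lemma b2_injA (m : ℕ) (hm : 5 ≤ m) :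
    ∀ i, i < m → ∀ j, j < m →
      2^(xdeg m i)*3^(ydeg m 0 i) * (if i = m-1 then 3 else 1)
        = 2^(xdeg m j)*3^(ydeg m 0 j) * (if j = m-1 then 3 else 1) → i = j := by
  have key : ∀ i, 2^(xdeg m i)*3^(ydeg m 0 i) * (if i = m-1 then 3 else 1)
      = 2^(xdeg m i)*3^(ydeg m 0 i + (if i = m-1 then 1 else 0)) := by
    intro i
    by_cases h : i = m-1 <;> simp [h, pow_add] <;> ring
  intro i hi j hj h
  rw [key, key] at h
  obtain ⟨h1, h2⟩ := pow23 h
  simp only [xdeg, ydeg] at h1 h2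
  split_ifs at h1 h2 <;> omega

lemma disj_main (a b : ℕ) (ha : 6 ≤ a) (hb : 2 ≤ b) :
    ∀ i, i < a → ∀ j, j < b →
      2^(xdeg a i)*3^(ydeg a 1 i) ≠ 3^(xdeg b j)*2^(ydeg b 0 j) := by
  intro i hi j hj h
  rw [mul_comm (3^(xdeg b j))] at h
  obtain ⟨h1, h2⟩ := pow23 h
  simp only [xdeg, ydeg] at h1 h2
  split_ifs at h1 h2 <;> omega

lemma schemeL_inj (m : ℕ) (hm : 5 ≤ m) :
    ∀ i, i < m → ∀ j, j < m →
      2^(xdeg m i)*3^(ydegL m i) = 2^(xdeg m j)*3^(ydegL m j) → i = j := by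
  intro i hi j hj h
  obtain ⟨h1, h2⟩ := pow23 h
  simp only [xdeg, ydegL] at h1 h2
  split_ifs at h1 h2 <;> omega

lemma schemeL_avoid (m : ℕ) (hm : 5 ≤ m) (v : ℕ) (hv : v ∈ ({2, 3, 6} : Finset ℕ)) :
    ∀ i, i < m → 2^(xdeg m i)*3^(ydegL m i) ≠ v := by
  intro i hi h
  fin_cases hv
  · obtain ⟨h1, h2⟩ := pow23 (x' := 1) (y' := 0) (by simpa using h)
    simp only [xdeg, ydegL] at h1 h2; split_ifs at h1 h2 <;> omega
  · obtain ⟨h1, h2⟩ := pow23 (x' := 0) (y' := 1) (by simpa using h)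
    simp only [xdeg, ydegL] at h1 h2; split_ifs at h1 h2 <;> omega
  · obtain ⟨h1, h2⟩ := pow23 (x' := 1) (y' := 1) (by simpa using h)
    simp only [xdeg, ydegL] at h1 h2; split_ifs at h1 h2 <;> omega

lemma one_mem_Icc13 : (1:ℕ) ∈ Finset.Icc 1 3 := by decide

lemma xdeg_pos (m i : ℕ) (hm : 2 ≤ m) (hi : i < m) : 1 ≤ xdeg m i := by
  simp only [xdeg]; split_ifs <;> omega

/-! tables for the small sporadic cases -/

def tA44 : ℕ → ℕ → ℕ := fun i j =>
  if (i=0∧j=3)∨(i=3∧j=0)∨(i=2∧j=3)∨(i=3∧j=2) then 2 else 1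
def tB44 : ℕ → ℕ → ℕ := fun i j =>
  if (i=0∧j=3)∨(i=3∧j=0)∨(i=2∧j=3)∨(i=3∧j=2) then 3 else 2
def tA43 : ℕ → ℕ → ℕ := fun i j =>
  if (i=0∧j=2)∨(i=2∧j=0)∨(i=0∧j=3)∨(i=3∧j=0)∨(i=1∧j=3)∨(i=3∧j=1)∨(i=2∧j=3)∨(i=3∧j=2)
    then 2 else 1
def tB43 : ℕ → ℕ → ℕ := fun i j => if (i=0∧j=2)∨(i=2∧j=0) then 3 else 1
def tT : ℕ → ℕ → ℕ := fun i j =>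
  if (i=0∧j=1)∨(i=1∧j=0) then 1 else if (i=0∧j=2)∨(i=2∧j=0) then 2 else
  if (i=1∧j=2)∨(i=2∧j=1) then 3 else 1
def tA5 : ℕ → ℕ → ℕ := fun i j =>
  if (i=0∧j=1)∨(i=1∧j=0)∨(i=1∧j=3)∨(i=3∧j=1) then 3 else
  if (i=0∧j=2)∨(i=2∧j=0) then 1 else 2

lemma tA44_symm : ∀ i j, tA44 j i = tA44 i j := by
  intro i j; unfold tA44; split_ifs <;> omega
lemma tB44_symm : ∀ i j, tB44 j i = tB44 i j := by
  intro i j; unfold tB44; split_ifs <;> omega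
lemma tA43_symm : ∀ i j, tA43 j i = tA43 i j := by
  intro i j; unfold tA43; split_ifs <;> omega
lemma tB43_symm : ∀ i j, tB43 j i = tB43 i j := by
  intro i j; unfold tB43; split_ifs <;> omega
lemma tT_symm : ∀ i j, tT j i = tT i j := by
  intro i j; unfold tT; split_ifs <;> omega
lemma tA5_symm : ∀ i j, tA5 j i = tA5 i j := by
  intro i j; unfold tA5; split_ifs <;> omega
lemma tA44_mem : ∀ i j, tA44 i j ∈ Finset.Icc 1 3 := by
  intro i j; unfold tA44; split_ifs <;> decide
lemma tB44_mem : ∀ i j, tB44 i j ∈ Finset.Icc 1 3 := by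
  intro i j; unfold tB44; split_ifs <;> decide
lemma tA43_mem : ∀ i j, tA43 i j ∈ Finset.Icc 1 3 := by
  intro i j; unfold tA43; split_ifs <;> decide
lemma tB43_mem : ∀ i j, tB43 i j ∈ Finset.Icc 1 3 := by
  intro i j; unfold tB43; split_ifs <;> decide
lemma tT_mem : ∀ i j, tT i j ∈ Finset.Icc 1 3 := by
  intro i j; unfold tT; split_ifs <;> decide
lemma tA5_mem : ∀ i j, tA5 i j ∈ Finset.Icc 1 3 := by
  intro i j; unfold tA5; split_ifs <;> decide

/-! reindexing products over a subset via an equivalence with `Fin a` -/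

open scoped Classical in
lemma prod_index {V : Type*} [Fintype V] (A : Set V) (a : ℕ) (eA : A ≃ Fin a)
    (ia : V → ℕ) (hia : ∀ (u : V) (hu : u ∈ A), ia u = (eA ⟨u, hu⟩ : ℕ))
    (v : V) (hv : v ∈ A) (h : ℕ → ℕ) (s : Finset V) (hs : ∀ x, x ∈ s ↔ x ∈ A) :
    ∏ u ∈ s.erase v, h (ia u) = ∏ j ∈ (Finset.range a).erase (ia v), h j := by
  apply Finset.prod_bij (i := fun u _ => ia u)
  · intro u hu
    simp only [Finset.mem_erase, hs] at hu
    obtain ⟨hne, huA⟩ := hu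
    simp only [Finset.mem_erase, Finset.mem_range]
    refine ⟨?_, ?_⟩
    · rw [hia u huA, hia v hv]
      intro hEq
      exact hne (by simpa using congrArg Subtype.val (eA.injective (Fin.val_injective hEq)))
    · rw [hia u huA]; exact (eA ⟨u, huA⟩).isLt
  · intro u hu u' hu' hEq
    simp only [Finset.mem_erase, hs] at hu hu'
    rw [hia u hu.2, hia u' hu'.2] at hEq
    simpa using congrArg Subtype.val (eA.injective (Fin.val_injective hEq))
  · intro j hj
    simp only [Finset.mem_erase, Finset.mem_range] at hj
    refine ⟨(eA.symm ⟨j, hj.2⟩ : V), ?_, ?_⟩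
    · simp only [Finset.mem_erase, hs]
      refine ⟨?_, (eA.symm ⟨j, hj.2⟩).2⟩
      intro hEq
      apply hj.1
      have h2 : (⟨v, hv⟩ : A) = eA.symm ⟨j, hj.2⟩ := Subtype.ext hEq.symm
      rw [hia v hv, h2, Equiv.apply_symm_apply]
    · rw [hia _ (eA.symm ⟨j, hj.2⟩).2]; simp
  · intro u hu; rfl

/-! ### The main construction -/

open scoped Classical in
theorem construct {V : Type*} [Fintype V] (G : SimpleGraph V) (A : Set V)
    (hA : G.IsClique A) (hB : G.IsClique Aᶜ)
    (a b : ℕ) (eA : A ≃ Fin a) (eB : (Aᶜ : Set V) ≃ Fin b)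
    (p0 u0 : V) (hp0 : p0 ∈ A) (hu0 : u0 ∈ Aᶜ) (hadj : G.Adj p0 u0)
    (gA gB : ℕ → ℕ → ℕ)
    (hgAs : ∀ i j, gA j i = gA i j) (hgBs : ∀ i j, gB j i = gB i j)
    (hgAv : ∀ i j, gA i j ∈ Finset.Icc 1 3) (hgBv : ∀ i j, gB i j ∈ Finset.Icc 1 3)
    (c : ℕ) (hc : c ∈ Finset.Icc 1 3)
    (FA FB : ℕ → ℕ)
    (hFA : ∀ i, i < a → FA i = (∏ j ∈ (Finset.range a).erase i, gA i j) *
      (if i = (eA ⟨p0, hp0⟩ : ℕ) then c else 1))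
    (hFB : ∀ j, j < b → FB j = (∏ i ∈ (Finset.range b).erase j, gB j i) *
      (if j = (eB ⟨u0, hu0⟩ : ℕ) then c else 1))
    (hinjA : ∀ i, i < a → ∀ j, j < a → FA i = FA j → i = j)
    (hinjB : ∀ i, i < b → ∀ j, j < b → FB i = FB j → i = j)
    (hdisj : ∀ i, i < a → ∀ j, j < b → FA i ≠ FB j) :
    ∃ w : Sym2 V → ℕ,
      (∀ u v : V, G.Adj u v → w s(u, v) ∈ Finset.Icc 1 3) ∧ ProductIrregular G w := by
  set ia : V → ℕ := fun v => if h : v ∈ A then (eA ⟨v, h⟩ : ℕ) else 0 with hia_def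
  set ib : V → ℕ := fun v => if h : v ∈ Aᶜ then (eB ⟨v, h⟩ : ℕ) else 0 with hib_def
  have hia : ∀ (u : V) (hu : u ∈ A), ia u = (eA ⟨u, hu⟩ : ℕ) := fun u hu => dif_pos hu
  have hib : ∀ (u : V) (hu : u ∈ Aᶜ), ib u = (eB ⟨u, hu⟩ : ℕ) := fun u hu => dif_pos hu
  have hiaInj : ∀ u ∈ A, ∀ v ∈ A, ia u = ia v → u = v := by
    intro u hu v hv h
    rw [hia u hu, hia v hv] at h
    simpa using congrArg Subtype.val (eA.injective (Fin.val_injective h))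
  have hibInj : ∀ u ∈ Aᶜ, ∀ v ∈ Aᶜ, ib u = ib v → u = v := by
    intro u hu v hv h
    rw [hib u hu, hib v hv] at h
    simpa using congrArg Subtype.val (eB.injective (Fin.val_injective h))
  have hialt : ∀ (v : V), v ∈ A → ia v < a := by
    intro v hv; rw [hia v hv]; exact (eA ⟨v, hv⟩).isLt
  have hiblt : ∀ (v : V), v ∈ Aᶜ → ib v < b := by
    intro v hv; rw [hib v hv]; exact (eB ⟨v, hv⟩).isLt
  set f : V → V → ℕ := fun u v =>
    if u ∈ A then
      (if v ∈ A then gA (ia u) (ia v) else (if u = p0 ∧ v = u0 then c else 1))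
    else
      (if v ∈ A then (if v = p0 ∧ u = u0 then c else 1) else gB (ib u) (ib v)) with hf_def
  have hfsymm : ∀ u v, f u v = f v u := by
    intro u v
    simp only [hf_def]
    by_cases hu : u ∈ A <;> by_cases hv : v ∈ A <;> simp [hu, hv, hgAs, hgBs]
  refine ⟨Sym2.lift ⟨f, fun u v => hfsymm u v⟩, ?_, ?_⟩
  · intro u v _
    simp only [Sym2.lift_mk, hf_def]
    have h1 : (1 : ℕ) ∈ Finset.Icc 1 3 := by decide
    by_cases hu : u ∈ A <;> by_cases hv : v ∈ A <;>
      simp only [hu, hv, if_pos, if_neg, if_true, if_false] <;>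
      first
        | exact hgAv _ _
        | exact hgBv _ _
        | (split <;> first | exact hc | exact h1)
  · have key : ∀ v : V,
        pdeg G (Sym2.lift ⟨f, fun u v => hfsymm u v⟩) v
          = if v ∈ A then FA (ia v) else FB (ib v) := by
      intro v
      rw [pdeg]
      simp only [Sym2.lift_mk]
      by_cases hv : v ∈ A
      · rw [if_pos hv, hFA (ia v) (hialt v hv)]
        rw [← Finset.prod_filter_mul_prod_filter_not (univ.filter (fun u => G.Adj v u)) (· ∈ A)]
        congr 1
        · have hset : (univ.filter (fun u => G.Adj v u)).filter (· ∈ A) = A.toFinset.erase v := by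
            ext u
            simp only [Finset.mem_filter, Finset.mem_univ, true_and, Finset.mem_erase,
              Set.mem_toFinset]
            constructor
            · rintro ⟨hadj', huA⟩; exact ⟨(G.ne_of_adj hadj').symm, huA⟩
            · rintro ⟨hne, huA⟩; exact ⟨hA hv huA (Ne.symm hne), huA⟩
          rw [hset]
          have : ∀ u ∈ A.toFinset.erase v, f v u = gA (ia v) (ia u) := by
            intro u hu
            simp only [Finset.mem_erase, Set.mem_toFinset] at hu
            simp only [hf_def, if_pos hv, if_pos hu.2]
          rw [Finset.prod_congr rfl this]
          exact prod_index A a eA ia hia v hv (gA (ia v)) _ (fun x => Set.mem_toFinset)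
        · have hval : ∀ u ∈ (univ.filter (fun u => G.Adj v u)).filter (¬ · ∈ A),
              f v u = if u = u0 ∧ v = p0 then c else 1 := by
            intro u hu
            simp only [Finset.mem_filter] at hu
            simp only [hf_def, if_pos hv, if_neg hu.2]
            by_cases h : v = p0 ∧ u = u0
            · rw [if_pos h, if_pos ⟨h.2, h.1⟩]
            · rw [if_neg h, if_neg (by tauto)]
          rw [Finset.prod_congr rfl hval]
          by_cases hvp : v = p0
          · have hval2 : ∀ u ∈ (univ.filter (fun u => G.Adj v u)).filter (¬ · ∈ A),
                (if u = u0 ∧ v = p0 then c else 1) = if u = u0 then c else 1 := by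
              intro u _
              by_cases h : u = u0
              · rw [if_pos ⟨h, hvp⟩, if_pos h]
              · rw [if_neg (by tauto), if_neg h]
            rw [Finset.prod_congr rfl hval2, Finset.prod_ite_eq' _ u0 (fun _ => c)]
            rw [if_pos (by
              simp only [Finset.mem_filter, Finset.mem_univ, true_and]
              exact ⟨hvp ▸ hadj, hu0⟩)]
            rw [if_pos (by rw [hvp, hia p0 hp0])]
          · rw [Finset.prod_eq_one (fun u _ => by rw [if_neg (by tauto)]),
              if_neg (fun h => hvp (hiaInj v hv p0 hp0 (h.trans (hia p0 hp0).symm)))]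
      · have hv' : v ∈ Aᶜ := hv
        rw [if_neg hv, hFB (ib v) (hiblt v hv')]
        rw [← Finset.prod_filter_mul_prod_filter_not (univ.filter (fun u => G.Adj v u)) (· ∈ A),
          mul_comm]
        congr 1
        · have hset : (univ.filter (fun u => G.Adj v u)).filter (¬ · ∈ A)
              = (Aᶜ : Set V).toFinset.erase v := by
            ext u
            simp only [Finset.mem_filter, Finset.mem_univ, true_and, Finset.mem_erase,
              Set.mem_toFinset, Set.mem_compl_iff]
            constructor
            · rintro ⟨hadj', huA⟩; exact ⟨(G.ne_of_adj hadj').symm, huA⟩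
            · rintro ⟨hne, huA⟩; exact ⟨hB hv' huA (Ne.symm hne), huA⟩
          rw [hset]
          have : ∀ u ∈ (Aᶜ : Set V).toFinset.erase v, f v u = gB (ib v) (ib u) := by
            intro u hu
            simp only [Finset.mem_erase, Set.mem_toFinset, Set.mem_compl_iff] at hu
            simp only [hf_def, if_neg hv, if_neg hu.2]
          rw [Finset.prod_congr rfl this]
          exact prod_index (Aᶜ : Set V) b eB ib hib v hv' (gB (ib v)) _ (fun x => Set.mem_toFinset)
        · have hval : ∀ u ∈ (univ.filter (fun u => G.Adj v u)).filter (· ∈ A),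
              f v u = if u = p0 ∧ v = u0 then c else 1 := by
            intro u hu
            simp only [Finset.mem_filter] at hu
            simp only [hf_def, if_neg hv, if_pos hu.2]
          rw [Finset.prod_congr rfl hval]
          by_cases hvu : v = u0
          · have hval2 : ∀ u ∈ (univ.filter (fun u => G.Adj v u)).filter (· ∈ A),
                (if u = p0 ∧ v = u0 then c else 1) = if u = p0 then c else 1 := by
              intro u _
              by_cases h : u = p0
              · rw [if_pos ⟨h, hvu⟩, if_pos h]
              · rw [if_neg (by tauto), if_neg h]
            rw [Finset.prod_congr rfl hval2, Finset.prod_ite_eq' _ p0 (fun _ => c)]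
            rw [if_pos (by
              simp only [Finset.mem_filter, Finset.mem_univ, true_and]
              exact ⟨hvu ▸ hadj.symm, hp0⟩)]
            rw [if_pos (by rw [hvu, hib u0 hu0])]
          · rw [Finset.prod_eq_one (fun u _ => by rw [if_neg (by tauto)]),
              if_neg (fun h => hvu (hibInj v hv' u0 hu0 (h.trans (hib u0 hu0).symm)))]
    intro v v' h
    rw [key, key] at h
    by_cases hv : v ∈ A <;> by_cases hv' : v' ∈ A
    · rw [if_pos hv, if_pos hv'] at h
      exact hiaInj v hv v' hv' (hinjA _ (hialt v hv) _ (hialt v' hv') h)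
    · rw [if_pos hv, if_neg hv'] at h
      exact absurd h (hdisj _ (hialt v hv) _ (hiblt v' hv'))
    · rw [if_neg hv, if_pos hv'] at h
      exact absurd h.symm (hdisj _ (hialt v' hv') _ (hiblt v hv))
    · rw [if_neg hv, if_neg hv'] at h
      exact hibInj v hv v' hv' (hinjB _ (hiblt v hv) _ (hiblt v' hv') h)

lemma exists_equiv_place {S : Type*} [Fintype S] (a : ℕ) (h : Nat.card S = a) (x : S)
    (iP : ℕ) (hiP : iP < a) : ∃ e : S ≃ Fin a, (e x : ℕ) = iP := by
  classical
  have h' : Fintype.card S = a := by rw [← Nat.card_eq_fintype_card]; exact h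
  let e0 := Fintype.equivFinOfCardEq h'
  refine ⟨e0.trans (Equiv.swap (e0 x) ⟨iP, hiP⟩), ?_⟩
  simp [Equiv.swap_apply_left]

lemma cross_of_walk {V : Type*} {G : SimpleGraph V} (A : Set V) {x y : V} (w : G.Walk x y) :
    x ∈ A → y ∉ A → ∃ p, p ∈ A ∧ ∃ u, u ∉ A ∧ G.Adj p u := by
  induction w with
  | nil => intro hx hy; exact absurd hx hy
  | @cons x₁ x₂ y₁ h w ih =>
    intro hx hy
    by_cases hx2 : x₂ ∈ A
    · exact ih hx2 hy
    · exact ⟨x₁, hx, x₂, hx2, h⟩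

end Aux

section Core

open scoped Classical

lemma ncard_sum {V : Type*} [Fintype V] (A : Set V) :
    Nat.card ↥A + Nat.card ↥(Aᶜ : Set V) = Fintype.card V := by
  rw [Nat.card_coe_set_eq, Nat.card_coe_set_eq, Set.ncard_add_ncard_compl]
  exact Nat.card_eq_fintype_card

/-- The case analysis : construction of a product-irregular 3-labelling. -/
lemma core {V : Type*} [Fintype V] (G : SimpleGraph V) (A : Set V)
    (hA : G.IsClique A) (hB : G.IsClique Aᶜ)
    (a b : ℕ) (hca : Nat.card ↥A = a) (hcb : Nat.card ↥(Aᶜ : Set V) = b)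
    (p0 u0 : V) (hp0 : p0 ∈ A) (hu0 : u0 ∈ (Aᶜ : Set V)) (hadj : G.Adj p0 u0)
    (hb1 : 1 ≤ b) (hba : b ≤ a) (h7 : 7 ≤ a + b) :
    ∃ w : Sym2 V → ℕ,
      (∀ u v : V, G.Adj u v → w s(u, v) ∈ Finset.Icc 1 3) ∧ ProductIrregular G w := by
  rcases Nat.lt_or_ge b 4 with hb4 | hb4
  · interval_cases b
    · -- b = 1
      have ha6 : 6 ≤ a := by omega
      obtain ⟨eA, heA⟩ := exists_equiv_place a hca ⟨p0, hp0⟩ 0 (by omega)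
      obtain ⟨eB, heB⟩ := exists_equiv_place 1 hcb ⟨u0, hu0⟩ 0 (by omega)
      refine construct G A hA hB a 1 eA eB p0 u0 hp0 hu0 hadj
        (schemeG a 0 2 3) (fun _ _ => 1)
        (fun i j => schemeG_symm a 0 2 3 i j) (fun _ _ => rfl)
        (schemeG_mem a 0 2 3 (by decide) (by decide)) (fun _ _ => one_mem_Icc13)
        1 (by decide)
        (fun i => 2^(xdeg a i)*3^(ydeg a 0 i)) (fun _ => 1)
        ?_ ?_ ?_ ?_ ?_
      · intro i hi
        simp only [ite_self, mul_one]
        exact (schemeG_prod a 0 2 3 (by omega) i hi).symm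
      · intro j hj
        simp only [ite_self, mul_one, Finset.prod_const_one]
      · exact schemeG_inj a 0 (by omega) (by omega) (by omega)
      · intro i hi j hj _; omega
      · intro i hi j hj h
        beta_reduce at h
        have h2 : (2:ℕ) ∣ 2^(xdeg a i)*3^(ydeg a 0 i) :=
          dvd_mul_of_dvd_left
            (dvd_pow_self 2 (Nat.one_le_iff_ne_zero.mp (xdeg_pos a i (by omega) hi))) _
        rw [h] at h2
        exact absurd (Nat.le_of_dvd one_pos h2) (by omega)
    · -- b = 2
      have ha5 : 5 ≤ a := by omega
      obtain ⟨eA, heA⟩ := exists_equiv_place a hca ⟨p0, hp0⟩ (a-1) (by omega)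
      obtain ⟨eB, heB⟩ := exists_equiv_place 2 hcb ⟨u0, hu0⟩ 0 (by omega)
      refine construct G A hA hB a 2 eA eB p0 u0 hp0 hu0 hadj
        (schemeG a 0 2 3) (fun _ _ => 1)
        (fun i j => schemeG_symm a 0 2 3 i j) (fun _ _ => rfl)
        (schemeG_mem a 0 2 3 (by decide) (by decide)) (fun _ _ => one_mem_Icc13)
        3 (by decide)
        (fun i => 2^(xdeg a i)*3^(ydeg a 0 i) * (if i = a-1 then 3 else 1))
        (fun j => if j = 0 then 3 else 1)
        ?_ ?_ ?_ ?_ ?_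
      · intro i hi
        simp only [heA, schemeG_prod a 0 2 3 (by omega) i hi]
      · intro j hj
        simp only [heB, Finset.prod_const_one, one_mul]
      · exact b2_injA a ha5
      · intro i hi j hj h
        beta_reduce at h
        split_ifs at h <;> omega
      · intro i hi j hj h
        beta_reduce at h
        have h2 : (2:ℕ) ∣ 2^(xdeg a i)*3^(ydeg a 0 i) * (if i = a-1 then 3 else 1) :=
          dvd_mul_of_dvd_left (dvd_mul_of_dvd_left
            (dvd_pow_self 2 (Nat.one_le_iff_ne_zero.mp (xdeg_pos a i (by omega) hi))) _) _
        rw [h] at h2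
        revert h2
        split_ifs <;> decide
    · -- b = 3
      rcases Nat.lt_or_ge a 5 with ha5 | ha5
      · -- a = 4 : sporadic table case
        have ha4 : a = 4 := by omega
        subst ha4
        obtain ⟨eA, heA⟩ := exists_equiv_place 4 hca ⟨p0, hp0⟩ 0 (by omega)
        obtain ⟨eB, heB⟩ := exists_equiv_place 3 hcb ⟨u0, hu0⟩ 0 (by omega)
        refine construct G A hA hB 4 3 eA eB p0 u0 hp0 hu0 hadj
          tA43 tB43 tA43_symm tB43_symm tA43_mem tB43_mem
          3 (by decide)
          (fun i => (∏ x ∈ (Finset.range 4).erase i, tA43 i x) * (if i = 0 then 3 else 1))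
          (fun j => (∏ x ∈ (Finset.range 3).erase j, tB43 j x) * (if j = 0 then 3 else 1))
          ?_ ?_ ?_ ?_ ?_
        · intro i hi; simp only [heA]
        · intro j hj; simp only [heB]
        · decide
        · decide
        · decide
      · -- a ≥ 5 : L-scheme against the triangle
        obtain ⟨eA, heA⟩ := exists_equiv_place a hca ⟨p0, hp0⟩ 0 (by omega)
        obtain ⟨eB, heB⟩ := exists_equiv_place 3 hcb ⟨u0, hu0⟩ 0 (by omega)
        refine construct G A hA hB a 3 eA eB p0 u0 hp0 hu0 hadj
          (schemeL a 2 3) tT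
          (fun i j => schemeL_symm a 2 3 i j) tT_symm
          (schemeL_mem a 2 3 (by decide) (by decide)) tT_mem
          1 (by decide)
          (fun i => 2^(xdeg a i)*3^(ydegL a i))
          (fun j => ∏ x ∈ (Finset.range 3).erase j, tT j x)
          ?_ ?_ ?_ ?_ ?_
        · intro i hi
          simp only [ite_self, mul_one]
          exact (schemeL_prod a 2 3 ha5 i hi).symm
        · intro j hj
          simp only [ite_self, mul_one]
        · exact schemeL_inj a ha5
        · decide
        · intro i hi j hj
          have hv : (∏ x ∈ (Finset.range 3).erase j, tT j x) ∈ ({2,3,6} : Finset ℕ) := by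
            have : ∀ j, j < 3 → (∏ x ∈ (Finset.range 3).erase j, tT j x) ∈
                ({2,3,6} : Finset ℕ) := by decide
            exact this j hj
          exact schemeL_avoid a ha5 _ hv i hi
  · -- b ≥ 4
    rcases Nat.lt_or_ge a 6 with ha6 | ha6
    · rcases Nat.lt_or_ge a 5 with ha5 | ha5
      · -- a = 4, b = 4
        have ha4 : a = 4 := by omega
        have hb4' : b = 4 := by omega
        subst ha4; subst hb4'
        obtain ⟨eA, heA⟩ := exists_equiv_place 4 hca ⟨p0, hp0⟩ 0 (by omega)
        obtain ⟨eB, heB⟩ := exists_equiv_place 4 hcb ⟨u0, hu0⟩ 0 (by omega)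
        refine construct G A hA hB 4 4 eA eB p0 u0 hp0 hu0 hadj
          tA44 tB44 tA44_symm tB44_symm tA44_mem tB44_mem
          3 (by decide)
          (fun i => (∏ x ∈ (Finset.range 4).erase i, tA44 i x) * (if i = 0 then 3 else 1))
          (fun j => (∏ x ∈ (Finset.range 4).erase j, tB44 j x) * (if j = 0 then 3 else 1))
          ?_ ?_ ?_ ?_ ?_
        · intro i hi; simp only [heA]
        · intro j hj; simp only [heB]
        · decide
        · decide
        · decide
      · -- a = 5, b ∈ {4, 5}
        have ha5' : a = 5 := by omega
        subst ha5'
        obtain ⟨eA, heA⟩ := exists_equiv_place 5 hca ⟨p0, hp0⟩ 0 (by omega)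
        obtain ⟨eB, heB⟩ := exists_equiv_place b hcb ⟨u0, hu0⟩ 0 (by omega)
        refine construct G A hA hB 5 b eA eB p0 u0 hp0 hu0 hadj
          tA5 (schemeG b 0 3 2)
          tA5_symm (fun i j => schemeG_symm b 0 3 2 i j)
          tA5_mem (schemeG_mem b 0 3 2 (by decide) (by decide))
          1 (by decide)
          (fun i => ∏ x ∈ (Finset.range 5).erase i, tA5 i x)
          (fun j => 3^(xdeg b j)*2^(ydeg b 0 j))
          ?_ ?_ ?_ ?_ ?_
        · intro i hi; simp only [ite_self, mul_one]
        · intro j hj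
          simp only [ite_self, mul_one]
          exact (schemeG_prod b 0 3 2 (by omega) j hj).symm
        · decide
        · exact schemeG_inj_sw b 0 (by omega) (by omega) (by omega)
        · have hb5 : b = 4 ∨ b = 5 := by omega
          rcases hb5 with h | h <;> subst h
          · decide
          · decide
    · -- a ≥ 6, b ≥ 4 : the generic case
      obtain ⟨eA, heA⟩ := exists_equiv_place a hca ⟨p0, hp0⟩ 0 (by omega)
      obtain ⟨eB, heB⟩ := exists_equiv_place b hcb ⟨u0, hu0⟩ 0 (by omega)
      refine construct G A hA hB a b eA eB p0 u0 hp0 hu0 hadj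
        (schemeG a 1 2 3) (schemeG b 0 3 2)
        (fun i j => schemeG_symm a 1 2 3 i j) (fun i j => schemeG_symm b 0 3 2 i j)
        (schemeG_mem a 1 2 3 (by decide) (by decide))
        (schemeG_mem b 0 3 2 (by decide) (by decide))
        1 (by decide)
        (fun i => 2^(xdeg a i)*3^(ydeg a 1 i))
        (fun j => 3^(xdeg b j)*2^(ydeg b 0 j))
        ?_ ?_ ?_ ?_ ?_
      · intro i hi
        simp only [ite_self, mul_one]
        exact (schemeG_prod a 1 2 3 (by omega) i hi).symm
      · intro j hj
        simp only [ite_self, mul_one]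
        exact (schemeG_prod b 0 3 2 (by omega) j hj).symm
      · exact schemeG_inj a 1 (by omega) (by omega) (by omega)
      · exact schemeG_inj_sw b 0 (by omega) (by omega) (by omega)
      · exact disj_main a b ha6 (by omega)

/-- The upper bound : some labelling with labels in `{1,2,3}` works. -/
lemma upper {V : Type*} [Fintype V] (G : SimpleGraph V) (hconn : G.Connected)
    (hcard : 7 ≤ Fintype.card V) (A : Set V) (hA : G.IsClique A) (hB : G.IsClique Aᶜ)
    (hba : Nat.card ↥(Aᶜ : Set V) ≤ Nat.card ↥A) :
    ∃ w : Sym2 V → ℕ,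
      (∀ u v : V, G.Adj u v → w s(u, v) ∈ Finset.Icc 1 3) ∧ ProductIrregular G w := by
  have hsum : Nat.card ↥A + Nat.card ↥(Aᶜ : Set V) = Fintype.card V := ncard_sum A
  by_cases hb0 : Nat.card ↥(Aᶜ : Set V) = 0
  · -- Aᶜ is empty : use the partition {x}ᶜ ∪ {x}
    obtain ⟨x⟩ : Nonempty V := Fintype.card_pos_iff.mp (by omega)
    have hAcn : ∀ z : V, z ∈ A := by
      intro z
      by_contra hzA
      have : Nat.card ↥(Aᶜ : Set V) ≠ 0 :=
        Nat.card_ne_zero.mpr ⟨⟨⟨z, hzA⟩⟩, inferInstance⟩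
      exact this hb0
    have hA'c : G.IsClique ({x}ᶜ : Set V) := hA.subset (fun z _ => hAcn z)
    have hA'cc : G.IsClique (({x}ᶜ : Set V)ᶜ) := by
      rw [compl_compl]
      exact SimpleGraph.isClique_singleton x
    have hcb' : Nat.card ↥((({x}ᶜ : Set V))ᶜ) = 1 := by
      rw [compl_compl, Nat.card_coe_set_eq, Set.ncard_singleton]
    have hsum2 : Nat.card ↥({x}ᶜ : Set V) + Nat.card ↥((({x}ᶜ : Set V))ᶜ) = Fintype.card V :=
      ncard_sum _
    obtain ⟨y, hy⟩ := Fintype.exists_ne_of_one_lt_card (by omega) x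
    have hyA : y ∈ ({x}ᶜ : Set V) := by simpa using hy
    have hxA : x ∉ ({x}ᶜ : Set V) := by simp
    obtain ⟨p, hp, u, hu, hadj⟩ :=
      cross_of_walk ({x}ᶜ : Set V) ((hconn.preconnected y x).some) hyA hxA
    exact core G ({x}ᶜ : Set V) hA'c hA'cc _ 1 rfl hcb' p u hp hu hadj
      (le_refl 1) (by omega) (by omega)
  · obtain ⟨⟨xa, hxa⟩⟩ : Nonempty ↥A := by
      rw [← Fintype.card_pos_iff, ← Nat.card_eq_fintype_card]
      omega
    obtain ⟨⟨xb, hxb⟩⟩ : Nonempty ↥(Aᶜ : Set V) := by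
      rw [← Fintype.card_pos_iff, ← Nat.card_eq_fintype_card]
      omega
    obtain ⟨p, hp, u, hu, hadj⟩ := cross_of_walk A ((hconn.preconnected xa xb).some) hxa hxb
    exact core G A hA hB _ _ rfl rfl p u hp hu hadj (by omega) hba (by omega)

/-- The lower bound : no labelling with labels in `{1,2}` works. -/
lemma lower_bound {V : Type*} [Fintype V] (G : SimpleGraph V) (hcard : 7 ≤ Fintype.card V) :
    ¬ ∃ w : Sym2 V → ℕ,
      (∀ u v : V, G.Adj u v → w s(u, v) ∈ Finset.Icc 1 2) ∧ ProductIrregular G w := by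
  rintro ⟨w, hw, hinj⟩
  set n := Fintype.card V with hn
  set k : V → ℕ := fun v => ((univ.filter (fun u => G.Adj v u)).filter (fun u => w s(v,u) = 2)).card
    with hk
  have hpdeg : ∀ v, pdeg G w v = 2 ^ k v := by
    intro v
    rw [pdeg]
    have h1 : ∀ u ∈ univ.filter (fun u => G.Adj v u),
        w s(v,u) = if w s(v,u) = 2 then 2 else 1 := by
      intro u hu
      simp only [Finset.mem_filter] at hu
      have := hw v u hu.2
      simp only [Finset.mem_Icc] at this
      by_cases h : w s(v,u) = 2
      · rw [if_pos h, h]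
      · rw [if_neg h]; omega
    rw [Finset.prod_congr rfl h1, prod_ite_pow]
  have hkinj : Function.Injective k := by
    intro u v h
    exact hinj (by rw [hpdeg, hpdeg, h])
  have hsub : ∀ v, (univ.filter (fun u => G.Adj v u)).filter (fun u => w s(v,u) = 2)
      ⊆ univ.erase v := by
    intro v u hu
    simp only [Finset.mem_filter] at hu
    simp only [Finset.mem_erase, Finset.mem_univ, and_true]
    exact (G.ne_of_adj hu.1.2).symm
  have hklt : ∀ v, k v < n := by
    intro v
    calc k v ≤ (univ.erase v).card := Finset.card_le_card (hsub v)
    _ < n := by rw [Finset.card_erase_of_mem (Finset.mem_univ v), Finset.card_univ]; omega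
  have himg : Finset.image k univ = Finset.range n := by
    apply Finset.eq_of_subset_of_card_le
    · intro x hx
      simp only [Finset.mem_image] at hx
      obtain ⟨v, _, hv⟩ := hx
      simp only [Finset.mem_range]
      exact hv ▸ hklt v
    · rw [Finset.card_range, Finset.card_image_of_injective _ hkinj, Finset.card_univ]
  obtain ⟨va, _, hva⟩ := Finset.mem_image.mp (himg ▸ Finset.mem_range.mpr (by omega : n - 1 < n))
  obtain ⟨vb, _, hvb⟩ := Finset.mem_image.mp (himg ▸ Finset.mem_range.mpr (by omega : 0 < n))
  have hne : vb ≠ va := by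
    intro h; rw [h, hva] at hvb; omega
  have hfull : (univ.filter (fun u => G.Adj va u)).filter (fun u => w s(va,u) = 2)
      = univ.erase va := by
    apply Finset.eq_of_subset_of_card_le (hsub va)
    rw [Finset.card_erase_of_mem (Finset.mem_univ va), Finset.card_univ]
    calc n - 1 = k va := hva.symm
    _ ≤ _ := le_refl _
  have hvbmem : vb ∈ (univ.filter (fun u => G.Adj va u)).filter (fun u => w s(va,u) = 2) := by
    rw [hfull]
    simp [hne]
  simp only [Finset.mem_filter] at hvbmem
  have hempty : (univ.filter (fun u => G.Adj vb u)).filter (fun u => w s(vb,u) = 2) = ∅ :=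
    Finset.card_eq_zero.mp hvb
  have : va ∈ (univ.filter (fun u => G.Adj vb u)).filter (fun u => w s(vb,u) = 2) := by
    simp only [Finset.mem_filter, Finset.mem_univ, true_and]
    refine ⟨hvbmem.1.2.symm, ?_⟩
    rw [Sym2.eq_swap]
    exact hvbmem.2
  rw [hempty] at this
  exact absurd this (Finset.notMem_empty va)

end Core

/-- Every connected graph of order at least `7` whose vertex set can be partitioned into
two cliques has product irregularity strength `3`. -/
theorem stmt_12 {V : Type*} [Fintype V] (G : SimpleGraph V)
    (hconn : G.Connected) (hcard : 7 ≤ Fintype.card V)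
    (hcover : ∃ A : Set V, G.IsClique A ∧ G.IsClique Aᶜ) :
    ps G = 3 := by
  classical
  obtain ⟨A, hA, hB⟩ := hcover
  have hmain : ∃ w : Sym2 V → ℕ,
      (∀ u v : V, G.Adj u v → w s(u, v) ∈ Finset.Icc 1 3) ∧ ProductIrregular G w := by
    rcases le_total (Nat.card ↥(Aᶜ : Set V)) (Nat.card ↥A) with h | h
    · exact upper G hconn hcard A hA hB h
    · refine upper G hconn hcard (Aᶜ) hB (by rwa [compl_compl]) ?_
      rw [compl_compl]
      exact h
  have h3 : 3 ∈ {s : ℕ | ∃ w : Sym2 V → ℕ,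
      (∀ u v : V, G.Adj u v → w s(u, v) ∈ Finset.Icc 1 s) ∧ ProductIrregular G w} := hmain
  rw [ps]
  apply le_antisymm
  · exact Nat.sInf_le h3
  · apply le_csInf ⟨3, h3⟩
    intro s hs
    by_contra hlt
    push_neg at hlt
    obtain ⟨w, hw, hirr⟩ := hs
    refine lower_bound G hcard ⟨w, fun u v huv => ?_, hirr⟩
    have := hw u v huv
    simp only [Finset.mem_Icc] at this ⊢
    omega
end

section
/- For all integers n ≥ 6, ps(K_5 + K_5 + K_n) = 3, i.e., the disjoint union of two copies of K_5 and a copy of K_n admits an edge labelling with labels in {1,2,3} giving all vertices pairwise distinct products of incident labels, and no such labelling exists with labels in {1,2}. -/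
/-!
With labels in `{1, 2}` the ten vertices of the two copies of `K₅` have degree 4, so their product
degrees all divide `2 ^ 4`, which has only five divisors.

With labels in `{1, 2, 3}` every product degree is `2 ^ a * 3 ^ b`, where `a` and `b` count the
incident labels 2 and 3. We label the two copies of `K₅` explicitly, with ten distinct products and
`a + b ≤ 3`, and `K_n` by the matrix `Mmat n 2 3 1`, whose rows have `a + b ≥ n - 2 ≥ 4` and
pairwise distinct pairs `(a, b)`: the number of 2s strictly decreases along the rows except for one
repeat, at row `(n + 1) / 2` (counting from 0), and that row has an entry 1 and hence one 3 fewer.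
-/

open Finset

/-- Component index for a three-part sum type. -/
def comp3 {n m l : ℕ} : Fin n ⊕ Fin m ⊕ Fin l → ℕ :=
  Sum.elim (fun _ => 0) (Sum.elim (fun _ => 1) (fun _ => 2))

/-- The disjoint union `K_n + K_m + K_l` of three complete graphs. -/
def cliqueTriple (n m l : ℕ) : SimpleGraph (Fin n ⊕ Fin m ⊕ Fin l) where
  Adj a b := a ≠ b ∧ comp3 a = comp3 b
  symm := ⟨fun a b h => ⟨h.1.symm, h.2.symm⟩⟩
  loopless := ⟨fun a h => h.1 rfl⟩

lemma two_pow_mul_three_pow_inj {a b c d : ℕ} (h : 2 ^ a * 3 ^ b = 2 ^ c * 3 ^ d) :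
    a = c ∧ b = d := by
  have hfac (p : ℕ) := congrArg (Nat.factorization · p) h
  simp only [Nat.factorization_mul (pow_ne_zero _ two_ne_zero) (pow_ne_zero _ three_ne_zero),
    Nat.prime_two.factorization_pow, Nat.prime_three.factorization_pow, Finsupp.add_apply] at hfac
  exact ⟨by simpa using hfac 2, by simpa using hfac 3⟩

lemma card_divisors_prime_pow {p : ℕ} (hp : p.Prime) (d : ℕ) : #(p ^ d).divisors = d + 1 := by
  rw [Nat.divisors_prime_pow hp, card_map, card_range]

open scoped Classical in
lemma pdeg_dvd_pow {V : Type*} [Fintype V] (G : SimpleGraph V) (w : Sym2 V → ℕ) (v : V) {m : ℕ}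
    (hw : ∀ u, G.Adj v u → w s(v, u) ∣ m) : pdeg G w v ∣ m ^ #{u | G.Adj v u} := by
  rw [← prod_const]
  exact prod_dvd_prod_of_dvd _ _ fun u hu => hw u (mem_filter.1 hu).2

open scoped Classical in
lemma card_le_of_productIrregular_of_le_two {V : Type*} [Fintype V] {G : SimpleGraph V}
    {w : Sym2 V → ℕ} (hw : ∀ u v, G.Adj u v → w s(u, v) ∈ Icc 1 2)
    (hirr : ProductIrregular G w) {S : Finset V} {d : ℕ} (hS : ∀ v ∈ S, #{u | G.Adj v u} = d) :
    #S ≤ d + 1 := by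
  have hdvd : ∀ v ∈ S, pdeg G w v ∣ 2 ^ d := fun v hv => by
    rw [← hS v hv]
    refine pdeg_dvd_pow G w v fun u huv => ?_
    obtain ⟨h1, h2⟩ := mem_Icc.1 (hw v u huv)
    interval_cases w s(v, u) <;> norm_num
  calc #S ≤ #(2 ^ d).divisors :=
        card_le_card_of_injOn (pdeg G w)
          (fun v hv => Nat.mem_divisors.2 ⟨hdvd v hv, by positivity⟩) hirr.injOn
    _ = d + 1 := card_divisors_prime_pow Nat.prime_two d

lemma ps_eq_succ {V : Type*} [Fintype V] {G : SimpleGraph V} {k : ℕ}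
    (hup : ∃ w : Sym2 V → ℕ, (∀ u v, G.Adj u v → w s(u, v) ∈ Icc 1 (k + 1)) ∧
      ProductIrregular G w)
    (hlow : ∀ w : Sym2 V → ℕ, (∀ u v, G.Adj u v → w s(u, v) ∈ Icc 1 k) →
      ¬ ProductIrregular G w) :
    ps G = k + 1 := by
  refine le_antisymm (Nat.sInf_le hup) (le_csInf ⟨_, hup⟩ ?_)
  rintro s ⟨w, hw, hirr⟩
  by_contra! hs
  refine hlow w (fun u v huv => ?_) hirr
  have := mem_Icc.1 (hw u v huv)
  exact mem_Icc.2 ⟨this.1, by omega⟩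

open scoped Classical in
lemma card_adj_cliqueTriple_inl {n m l : ℕ} (i : Fin n) :
    #{u | (cliqueTriple n m l).Adj (Sum.inl i) u} = n - 1 := by
  have : ({u | (cliqueTriple n m l).Adj (Sum.inl i) u} : Finset _) =
      (univ.erase i).map Function.Embedding.inl := by
    ext (j | j | j) <;> simp [cliqueTriple, comp3, eq_comm]
  rw [this, card_map, card_erase_of_mem (mem_univ i), card_univ, Fintype.card_fin]

open scoped Classical in
lemma card_adj_cliqueTriple_inr_inl {n m l : ℕ} (i : Fin m) :
    #{u | (cliqueTriple n m l).Adj (Sum.inr (Sum.inl i)) u} = m - 1 := by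
  have : ({u | (cliqueTriple n m l).Adj (Sum.inr (Sum.inl i)) u} : Finset _) =
      (univ.erase i).map (Function.Embedding.inl.trans Function.Embedding.inr) := by
    ext (j | j | j) <;> simp [cliqueTriple, comp3, eq_comm]
  rw [this, card_map, card_erase_of_mem (mem_univ i), card_univ, Fintype.card_fin]

lemma not_productIrregular_cliqueTriple_five_five (n : ℕ) (w : Sym2 (Fin 5 ⊕ Fin 5 ⊕ Fin n) → ℕ)
    (hw : ∀ u v, (cliqueTriple 5 5 n).Adj u v → w s(u, v) ∈ Icc 1 2) :
    ¬ ProductIrregular (cliqueTriple 5 5 n) w := by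
  intro hirr
  classical
  let S : Finset (Fin 5 ⊕ Fin 5 ⊕ Fin n) := univ.map (Function.Embedding.sumMap (.refl _) .inl)
  have hS : ∀ v ∈ S, #{u | (cliqueTriple 5 5 n).Adj v u} = 4 := by
    simp only [S, mem_map, mem_univ, true_and]
    rintro _ ⟨i | i, rfl⟩
    · exact card_adj_cliqueTriple_inl i
    · exact card_adj_cliqueTriple_inr_inl i
  have := card_le_of_productIrregular_of_le_two hw hirr hS
  simp [S] at this

section SymmetricLabel

variable {V : Type*} {M : Matrix V V ℕ}

def symLabel (hM : M.IsSymm) : Sym2 V → ℕ :=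
  Sym2.lift ⟨fun u v => M u v, fun u v => hM.apply v u⟩

lemma symLabel_mem_Icc {G : SimpleGraph V} (hM : M.IsSymm) (hG : ∀ u v, M u v ≠ 0 ↔ G.Adj u v)
    {k : ℕ} (hk : ∀ u v, M u v ≤ k) (u v : V) (huv : G.Adj u v) : symLabel hM s(u, v) ∈ Icc 1 k :=
  mem_Icc.2 ⟨Nat.one_le_iff_ne_zero.2 ((hG u v).2 huv), hk u v⟩

lemma pdeg_symLabel [Fintype V] [DecidableEq V] {G : SimpleGraph V} (hM : M.IsSymm)
    (hG : ∀ u v, M u v ≠ 0 ↔ G.Adj u v) :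
    pdeg G (symLabel hM) = rowProd M := by
  ext v
  unfold pdeg rowProd
  exact prod_congr (by ext u; simp [hG]) fun _ _ => rfl

lemma productIrregular_symLabel [Fintype V] [DecidableEq V] {G : SimpleGraph V} (hM : M.IsSymm)
    (hG : ∀ u v, M u v ≠ 0 ↔ G.Adj u v) (hPI : MatPI M) : ProductIrregular G (symLabel hM) := by
  rwa [ProductIrregular, pdeg_symLabel hM hG]

end SymmetricLabel

section RowProducts

variable {ι κ : Type*} [Fintype ι] [DecidableEq ι] [Fintype κ] [DecidableEq κ]

lemma rowProd_eq_prod_ite (M : Matrix ι ι ℕ) (i : ι) :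
    rowProd M i = ∏ j, if M i j = 0 then 1 else M i j := by
  rw [rowProd, prod_filter]
  exact prod_congr rfl fun j _ => by split_ifs <;> simp_all

lemma rowProd_fromBlocks_inl (A : Matrix ι ι ℕ) (D : Matrix κ κ ℕ) (i : ι) :
    rowProd (Matrix.fromBlocks A 0 0 D) (Sum.inl i) = rowProd A i := by
  simp only [rowProd_eq_prod_ite, Fintype.prod_sum_type, Matrix.fromBlocks_apply₁₁,
    Matrix.fromBlocks_apply₁₂, Matrix.zero_apply, ↓reduceIte, prod_const_one, mul_one]
  rfl

lemma rowProd_fromBlocks_inr (A : Matrix ι ι ℕ) (D : Matrix κ κ ℕ) (i : κ) :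
    rowProd (Matrix.fromBlocks A 0 0 D) (Sum.inr i) = rowProd D i := by
  simp only [rowProd_eq_prod_ite, Fintype.prod_sum_type, Matrix.fromBlocks_apply₂₁,
    Matrix.fromBlocks_apply₂₂, Matrix.zero_apply, ↓reduceIte, prod_const_one, one_mul]
  rfl

lemma MatPI.fromBlocks {A : Matrix ι ι ℕ} {D : Matrix κ κ ℕ} (hA : MatPI A) (hD : MatPI D)
    (hAD : ∀ i j, rowProd A i ≠ rowProd D j) : MatPI (Matrix.fromBlocks A 0 0 D) := by
  rintro (i | i) (j | j) h <;>
    simp only [rowProd_fromBlocks_inl, rowProd_fromBlocks_inr] at h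
  · exact congrArg _ (hA h)
  · exact absurd h (hAD i j)
  · exact absurd h.symm (hAD j i)
  · exact congrArg _ (hD h)

lemma rowProd_eq_two_pow_mul_three_pow (M : Matrix ι ι ℕ) (i : ι) (hM : ∀ j, M i j ≤ 3) :
    rowProd M i = 2 ^ #{j | M i j = 2} * 3 ^ #{j | M i j = 3} := by
  have hfactor : ∀ j, (if M i j = 0 then 1 else M i j) =
      2 ^ (if M i j = 2 then 1 else 0) * 3 ^ (if M i j = 3 then 1 else 0) := fun j => by
    have := hM j
    interval_cases M i j <;> rfl
  rw [rowProd_eq_prod_ite, prod_congr rfl fun j _ => hfactor j, prod_mul_distrib,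
    prod_pow_eq_pow_sum, prod_pow_eq_pow_sum, sum_boole, sum_boole, Nat.cast_id, Nat.cast_id]

lemma rowProd_ne_of_card_lt {A : Matrix ι ι ℕ} {D : Matrix κ κ ℕ} {i : ι} {j : κ}
    (hA : ∀ k, A i k ≤ 3) (hD : ∀ k, D j k ≤ 3)
    (hlt : #{k | A i k = 2} + #{k | A i k = 3} < #{k | D j k = 2} + #{k | D j k = 3}) :
    rowProd A i ≠ rowProd D j := by
  rw [rowProd_eq_two_pow_mul_three_pow A i hA, rowProd_eq_two_pow_mul_three_pow D j hD]
  intro h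
  have := two_pow_mul_three_pow_inj h
  omega

end RowProducts

lemma card_filter_fin_val {n : ℕ} (p : ℕ → Prop) [DecidablePred p] :
    #{j : Fin n | p j} = #{j ∈ range n | p j} := by
  rw [← Nat.Iio_eq_range, ← Fin.map_valEmbedding_univ, filter_map, card_map]
  rfl

section Mmat

variable {n : ℕ}

lemma Mmat_isSymm (x y z : ℕ) : (Mmat n x y z).IsSymm := by
  refine Matrix.IsSymm.ext fun i j => ?_
  unfold Mmat
  simp only [Fin.ext_iff]
  split_ifs <;> omega

lemma Mmat_ne_zero_iff (i j : Fin n) : Mmat n 2 3 1 i j ≠ 0 ↔ i ≠ j := by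
  unfold Mmat
  split_ifs <;> simp_all

lemma Mmat_le_three (i j : Fin n) : Mmat n 2 3 1 i j ≤ 3 := by
  unfold Mmat
  split_ifs <;> norm_num

def mTwos (n i : ℕ) : ℕ := if 2 * i < n then n - 1 - i else n - i

def mOnes (n i : ℕ) : ℕ := if i = (n + 1) / 2 ∨ i = n - 1 then 1 else 0

lemma card_Mmat_eq_zero (i : Fin n) : #{j | Mmat n 2 3 1 i j = 0} = 1 := by
  rw [card_eq_one]
  refine ⟨i, ?_⟩
  ext j
  have := Mmat_ne_zero_iff i j
  simp only [mem_filter, mem_univ, true_and, mem_singleton]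
  tauto

lemma Mmat_eq_two_iff (i j : Fin n) : Mmat n 2 3 1 i j = 2 ↔ (j : ℕ) ≠ i ∧ (j : ℕ) < n - i := by
  unfold Mmat
  split_ifs <;> grind

lemma Mmat_eq_one_iff (i j : Fin n) : Mmat n 2 3 1 i j = 1 ↔
    (j : ℕ) ≠ i ∧ n - i ≤ j ∧ ((i : ℕ) = (n + 1) / 2 ∧ (j : ℕ) = n - 1 ∨
      (i : ℕ) = n - 1 ∧ (j : ℕ) = (n + 1) / 2) := by
  unfold Mmat
  split_ifs <;> grind

lemma card_Mmat_eq_two (i : Fin n) : #{j | Mmat n 2 3 1 i j = 2} = mTwos n i := by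
  simp_rw [Mmat_eq_two_iff]
  rw [card_filter_fin_val (fun j => j ≠ i ∧ j < n - i)]
  have : {j ∈ range n | j ≠ (i : ℕ) ∧ j < n - i} = (range (n - i)).erase (i : ℕ) := by
    ext j
    simp only [mem_filter, mem_range, mem_erase]
    omega
  rw [this, card_erase_eq_ite, card_range, mTwos]
  simp only [mem_range]
  split_ifs <;> omega

lemma card_Mmat_eq_one (hn : 4 ≤ n) (i : Fin n) : #{j | Mmat n 2 3 1 i j = 1} = mOnes n i := by
  simp_rw [Mmat_eq_one_iff]
  rw [card_filter_fin_val (fun j => j ≠ i ∧ n - i ≤ j ∧ ((i : ℕ) = (n + 1) / 2 ∧ j = n - 1 ∨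
      (i : ℕ) = n - 1 ∧ j = (n + 1) / 2))]
  have := i.isLt
  unfold mOnes
  split_ifs with h
  · rw [card_eq_one]
    refine ⟨if (i : ℕ) = n - 1 then (n + 1) / 2 else n - 1, ?_⟩
    ext j
    simp only [mem_filter, mem_range, mem_singleton]
    split_ifs <;> omega
  · rw [card_eq_zero, filter_eq_empty_iff]
    intro j hj
    simp only [mem_range] at hj
    omega

lemma card_Mmat_eq_three (hn : 4 ≤ n) (i : Fin n) :
    #{j | Mmat n 2 3 1 i j = 3} = n - 1 - mTwos n i - mOnes n i := by
  have hsum : #(univ : Finset (Fin n)) = ∑ x ∈ range 4, #{j | Mmat n 2 3 1 i j = x} :=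
    card_eq_sum_card_fiberwise fun j _ => mem_range.2 (Nat.lt_succ_of_le (Mmat_le_three i j))
  simp only [sum_range_succ, sum_range_zero, card_univ, Fintype.card_fin, card_Mmat_eq_zero,
    card_Mmat_eq_one hn, card_Mmat_eq_two] at hsum
  omega

lemma rowProd_Mmat_s17 (hn : 4 ≤ n) (i : Fin n) :
    rowProd (Mmat n 2 3 1) i = 2 ^ mTwos n i * 3 ^ (n - 1 - mTwos n i - mOnes n i) := by
  rw [rowProd_eq_two_pow_mul_three_pow _ i (Mmat_le_three i), card_Mmat_eq_two,
    card_Mmat_eq_three hn]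

lemma matPI_Mmat (hn : 4 ≤ n) : MatPI (Mmat n 2 3 1) := by
  intro i j h
  rw [rowProd_Mmat_s17 hn, rowProd_Mmat_s17 hn] at h
  obtain ⟨htwos, hthrees⟩ := two_pow_mul_three_pow_inj h
  have := i.isLt
  have := j.isLt
  unfold mTwos mOnes at *
  ext
  split_ifs at htwos hthrees <;> omega

end Mmat

lemma rowProd_ne_rowProd_Mmat {ι : Type*} [Fintype ι] [DecidableEq ι] {A : Matrix ι ι ℕ} {i : ι}
    (hA : ∀ k, A i k ≤ 3) (hcard : #{k | A i k = 2} + #{k | A i k = 3} ≤ 3) {n : ℕ}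
    (hn : 6 ≤ n) (j : Fin n) : rowProd A i ≠ rowProd (Mmat n 2 3 1) j := by
  refine rowProd_ne_of_card_lt hA (Mmat_le_three j) ?_
  rw [card_Mmat_eq_two, card_Mmat_eq_three (by omega)]
  unfold mOnes
  split_ifs <;> omega

-- Row products `8, 4, 6, 12, 1` here and `27, 2, 3, 9, 18` for `matK5B`.
def matK5A : Matrix (Fin 5) (Fin 5) ℕ :=
  !![0, 2, 2, 2, 1; 2, 0, 1, 2, 1; 2, 1, 0, 3, 1; 2, 2, 3, 0, 1; 1, 1, 1, 1, 0]

def matK5B : Matrix (Fin 5) (Fin 5) ℕ :=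
  !![0, 1, 3, 3, 3; 1, 0, 1, 1, 2; 3, 1, 0, 1, 1; 3, 1, 1, 0, 3; 3, 2, 1, 3, 0]

lemma matK5A_isSymm : matK5A.IsSymm := by decide

lemma matK5B_isSymm : matK5B.IsSymm := by decide

lemma matK5A_ne_zero_iff (i j : Fin 5) : matK5A i j ≠ 0 ↔ i ≠ j := by
  fin_cases i <;> fin_cases j <;> decide

lemma matK5B_ne_zero_iff (i j : Fin 5) : matK5B i j ≠ 0 ↔ i ≠ j := by
  fin_cases i <;> fin_cases j <;> decide

lemma matK5A_le_three (i j : Fin 5) : matK5A i j ≤ 3 := by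
  fin_cases i <;> fin_cases j <;> decide

lemma matK5B_le_three (i j : Fin 5) : matK5B i j ≤ 3 := by
  fin_cases i <;> fin_cases j <;> decide

lemma matPI_matK5A : MatPI matK5A := by
  unfold MatPI
  decide

lemma matPI_matK5B : MatPI matK5B := by
  unfold MatPI
  decide

lemma rowProd_matK5A_ne_rowProd_matK5B : ∀ i j : Fin 5, rowProd matK5A i ≠ rowProd matK5B j := by
  decide

lemma card_matK5A_eq_two_add_card_eq_three_le (i : Fin 5) :
    #{k | matK5A i k = 2} + #{k | matK5A i k = 3} ≤ 3 := by
  fin_cases i <;> decide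

lemma card_matK5B_eq_two_add_card_eq_three_le (i : Fin 5) :
    #{k | matK5B i k = 2} + #{k | matK5B i k = 3} ≤ 3 := by
  fin_cases i <;> decide

def blockMat (n : ℕ) : Matrix (Fin 5 ⊕ Fin 5 ⊕ Fin n) (Fin 5 ⊕ Fin 5 ⊕ Fin n) ℕ :=
  Matrix.fromBlocks matK5A 0 0 (Matrix.fromBlocks matK5B 0 0 (Mmat n 2 3 1))

lemma blockMat_isSymm (n : ℕ) : (blockMat n).IsSymm :=
  matK5A_isSymm.fromBlocks (Matrix.transpose_zero)
    (matK5B_isSymm.fromBlocks (Matrix.transpose_zero) (Mmat_isSymm 2 3 1))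

lemma blockMat_ne_zero_iff (n : ℕ) (u v : Fin 5 ⊕ Fin 5 ⊕ Fin n) :
    blockMat n u v ≠ 0 ↔ (cliqueTriple 5 5 n).Adj u v := by
  rcases u with i | i | i <;> rcases v with j | j | j <;>
    simp [blockMat, cliqueTriple, comp3, matK5A_ne_zero_iff, matK5B_ne_zero_iff,
      Mmat_ne_zero_iff]

lemma blockMat_le_three (n : ℕ) (u v : Fin 5 ⊕ Fin 5 ⊕ Fin n) : blockMat n u v ≤ 3 := by
  rcases u with i | i | i <;> rcases v with j | j | j <;>
    simp [blockMat, matK5A_le_three, matK5B_le_three, Mmat_le_three]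

lemma matPI_blockMat {n : ℕ} (hn : 6 ≤ n) : MatPI (blockMat n) := by
  have hA (i : Fin 5) (j : Fin n) : rowProd matK5A i ≠ rowProd (Mmat n 2 3 1) j :=
    rowProd_ne_rowProd_Mmat (matK5A_le_three i) (card_matK5A_eq_two_add_card_eq_three_le i) hn j
  have hB (i : Fin 5) (j : Fin n) : rowProd matK5B i ≠ rowProd (Mmat n 2 3 1) j :=
    rowProd_ne_rowProd_Mmat (matK5B_le_three i) (card_matK5B_eq_two_add_card_eq_three_le i) hn j
  refine matPI_matK5A.fromBlocks (matPI_matK5B.fromBlocks (matPI_Mmat (by omega)) hB) ?_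
  rintro i (j | j)
  · rw [rowProd_fromBlocks_inl]
    exact rowProd_matK5A_ne_rowProd_matK5B i j
  · rw [rowProd_fromBlocks_inr]
    exact hA i j

lemma exists_productIrregular_cliqueTriple_five_five {n : ℕ} (hn : 6 ≤ n) :
    ∃ w : Sym2 (Fin 5 ⊕ Fin 5 ⊕ Fin n) → ℕ,
      (∀ u v, (cliqueTriple 5 5 n).Adj u v → w s(u, v) ∈ Icc 1 3) ∧
      ProductIrregular (cliqueTriple 5 5 n) w :=
  ⟨symLabel (blockMat_isSymm n), symLabel_mem_Icc _ (blockMat_ne_zero_iff n) (blockMat_le_three n),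
    productIrregular_symLabel _ (blockMat_ne_zero_iff n) (matPI_blockMat hn)⟩

/-- For all `n ≥ 6`, `ps (K_5 + K_5 + K_n) = 3`: there is a product-irregular labelling
with labels in `{1,2,3}`, and none with labels in `{1,2}`. -/
theorem stmt_17 (n : ℕ) (hn : 6 ≤ n) :
    ps (cliqueTriple 5 5 n) = 3 ∧
    (∃ w : Sym2 (Fin 5 ⊕ Fin 5 ⊕ Fin n) → ℕ,
      (∀ u v, (cliqueTriple 5 5 n).Adj u v → w s(u, v) ∈ Finset.Icc 1 3) ∧
      ProductIrregular (cliqueTriple 5 5 n) w) ∧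
    (∀ w : Sym2 (Fin 5 ⊕ Fin 5 ⊕ Fin n) → ℕ,
      (∀ u v, (cliqueTriple 5 5 n).Adj u v → w s(u, v) ∈ Finset.Icc 1 2) →
      ¬ ProductIrregular (cliqueTriple 5 5 n) w) := by
  have upper := exists_productIrregular_cliqueTriple_five_five hn
  have lower := not_productIrregular_cliqueTriple_five_five n
  exact ⟨ps_eq_succ upper lower, upper, lower⟩
end
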